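/- arXiv:1410.3168 — 8 statements merged into one kernel-verified Lean document; each statement's English description precedes it below -/
import Mathlib

section
/- Let G be a finite connected simple undirected graph and let α ∈ (0,1). Then for every q ≥ 1 and all vertices u, v, the limit DSD^α_q(u,v) = lim_{k→∞} ‖He^{{k}}_α(u) − He^{{k}}_α(v)‖_q exists, and DSD^α_q(u,v) = (1−α)^{−1} ‖(1_u − 1_v) 𝔾‖_q, where 𝔾 is the Green's function of G. -/
open Finset Matrix

/-- Doeblin contraction: if all entries of a row-stochastic matrix are ≥ δ, then
multiplication by it contracts the L¹ norm of mean-zero row vectors by `1 - n*δ`. -/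
lemma dsd_contract {n : ℕ} (M : Matrix (Fin n) (Fin n) ℝ) (δ : ℝ)
    (hδ : ∀ i j, δ ≤ M i j) (hrow : ∀ i, ∑ j, M i j = 1)
    (w : Fin n → ℝ) (hw : ∑ i, w i = 0) :
    ∑ j, |(Matrix.vecMul w M) j| ≤ (1 - n * δ) * ∑ i, |w i| := by
  have h1 : ∀ j, |(Matrix.vecMul w M) j| ≤ ∑ i, |w i| * (M i j - δ) := by
    intro j
    have he : (Matrix.vecMul w M) j = ∑ i, w i * (M i j - δ) := by
      simp only [mul_sub, Finset.sum_sub_distrib, ← Finset.sum_mul, hw, zero_mul, sub_zero]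
      simp [Matrix.vecMul, dotProduct]
    rw [he]
    refine (Finset.abs_sum_le_sum_abs _ _).trans ?_
    refine Finset.sum_le_sum fun i _ => ?_
    rw [abs_mul, abs_of_nonneg (show (0:ℝ) ≤ M i j - δ by linarith [hδ i j])]
  calc ∑ j, |(Matrix.vecMul w M) j| ≤ ∑ j, ∑ i, |w i| * (M i j - δ) :=
        Finset.sum_le_sum fun j _ => h1 j
    _ = ∑ i, |w i| * (1 - n * δ) := by
        rw [Finset.sum_comm]
        refine Finset.sum_congr rfl fun i _ => ?_
        rw [← Finset.mul_sum, Finset.sum_sub_distrib, hrow i]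
        simp [mul_comm]
    _ = (1 - n * δ) * ∑ i, |w i| := by rw [← Finset.sum_mul, mul_comm]

/-- For a finite connected simple graph `G` and `α ∈ (0,1)`, for every
`q ≥ 1` and all vertices `u, v`, the limit
`DSD^α_q(u,v) = lim_{k→∞} ‖He^{(k)}_α(u) − He^{(k)}_α(v)‖_q` exists and equals
`(1−α)⁻¹ ‖(1_u − 1_v) 𝔾‖_q`, where `𝔾` is the Green's function of `G`. -/
theorem dsd_lazy_walk_limit
    (n : ℕ) (G : SimpleGraph (Fin n)) [DecidableRel G.Adj]
    (hconn : G.Connected)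
    (α q : ℝ) (hα : α ∈ Set.Ioo (0 : ℝ) 1) (hq : 1 ≤ q)
    -- the α-lazy random walk transition matrix `T_α = αI + (1−α)D⁻¹A`
    (T : Matrix (Fin n) (Fin n) ℝ)
    (hT : T = α • (1 : Matrix (Fin n) (Fin n) ℝ)
        + (1 - α) • ((Matrix.diagonal fun i => ((G.degree i : ℝ))⁻¹) * G.adjMatrix ℝ))
    -- `He k u j = Σ_{t=0}^{k} (T_α^t)(u,j)`
    (He : ℕ → Fin n → Fin n → ℝ)
    (hHe : ∀ k u j, He k u j = ∑ t ∈ Finset.range (k + 1), (T ^ t) u j)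
    -- the Green's function `𝔾` of `G`
    (𝔾 : Matrix (Fin n) (Fin n) ℝ)
    (hG1 : ∀ x y : Fin n,
      (𝔾 * (1 - (Matrix.diagonal fun i => ((G.degree i : ℝ))⁻¹) * G.adjMatrix ℝ)) x y
        = (if x = y then (1 : ℝ) else 0) - (G.degree y : ℝ) / ∑ i, (G.degree i : ℝ))
    (hG2 : ∀ x : Fin n, ∑ y, 𝔾 x y = 0)
    (u v : Fin n) :
    Filter.Tendsto
      (fun k : ℕ => (∑ j, |He k u j - He k v j| ^ q) ^ (1 / q))
      Filter.atTop
      (nhds ((1 - α)⁻¹ * (∑ j, |𝔾 u j - 𝔾 v j| ^ q) ^ (1 / q))) := by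
  obtain ⟨hα0, hα1⟩ := hα
  haveI : Nonempty (Fin n) := hconn.nonempty
  have hn : 0 < n := Fin.pos_iff_nonempty.mpr ‹_›
  -- all degrees are positive (else derive a contradiction from hG1/hG2)
  by_cases hdeg : ∀ i, 0 < G.degree i
  case neg =>
    push_neg at hdeg
    obtain ⟨i, hi⟩ := hdeg
    have hi0 : G.degree i = 0 := Nat.le_zero.mp hi
    have hnoadj : ∀ j, ¬ G.Adj i j := by
      intro j hj
      have hmem : j ∈ G.neighborFinset i := (G.mem_neighborFinset i j).mpr hj
      have hcard : (G.neighborFinset i).card = 0 := hi0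
      rw [Finset.card_eq_zero] at hcard
      rw [hcard] at hmem
      exact absurd hmem (Finset.notMem_empty j)
    -- every vertex equals i
    have hall : ∀ j : Fin n, j = i := by
      intro j
      obtain ⟨p⟩ := (hconn i j)
      cases p with
      | nil => rfl
      | cons h _ => exact absurd h (hnoadj _)
    have hA : G.adjMatrix ℝ = 0 := by
      ext x y
      have := hnoadj y
      rw [hall x] at *
      simp [this]
    have h1 : 𝔾 i i = 1 := by
      have := hG1 i i
      rw [hA] at this
      simp [hi0] at this
      simpa using this
    have h2 := hG2 i
    have : ∑ y, 𝔾 i y = ∑ y : Fin n, 1 := by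
      refine Finset.sum_congr rfl fun y _ => ?_
      rw [hall y, h1]
    rw [h2] at this
    simp at this
    have : (0:ℝ) < n := by exact_mod_cast hn
    linarith
  -- main case: all degrees positive
  set P : Matrix (Fin n) (Fin n) ℝ :=
    (Matrix.diagonal fun i => ((G.degree i : ℝ))⁻¹) * G.adjMatrix ℝ with hPdef
  have h1α : (0:ℝ) < 1 - α := by linarith
  have h1α' : (1 - α) ≠ 0 := ne_of_gt h1α
  have hdegR : ∀ i, (0:ℝ) < (G.degree i : ℝ) := fun i => by exact_mod_cast hdeg i
  have hPentry : ∀ i j, P i j = ((G.degree i : ℝ))⁻¹ * (G.adjMatrix ℝ) i j := by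
    intro i j
    rw [hPdef, Matrix.diagonal_mul]
  have hTentry : ∀ i j, T i j
      = α * (if i = j then 1 else 0)
        + (1 - α) * (((G.degree i : ℝ))⁻¹ * (G.adjMatrix ℝ) i j) := by
    intro i j
    rw [hT]
    simp [Matrix.add_apply, Matrix.smul_apply, Matrix.one_apply, smul_eq_mul, hPentry,
      ← hPdef]
  have hAnn : ∀ i j, 0 ≤ (G.adjMatrix ℝ) i j := by
    intro i j; simp [SimpleGraph.adjMatrix_apply]; positivity
  have hTnn : ∀ i j, 0 ≤ T i j := by
    intro i j
    rw [hTentry]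
    have := hAnn i j
    have := (hdegR i)
    positivity
  have hrowA : ∀ i, ∑ j, (G.adjMatrix ℝ) i j = (G.degree i : ℝ) := by
    intro i
    simp only [SimpleGraph.adjMatrix_apply]
    rw [Finset.sum_boole]
    congr 1
    rw [SimpleGraph.degree, SimpleGraph.neighborFinset_eq_filter]
  have hTrow : ∀ i, ∑ j, T i j = 1 := by
    intro i
    simp only [hTentry]
    rw [Finset.sum_add_distrib, ← Finset.mul_sum, ← Finset.mul_sum, ← Finset.mul_sum,
      hrowA i, Finset.sum_ite_eq, inv_mul_cancel₀ (ne_of_gt (hdegR i))]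
    simp
  -- facts about powers of T
  have hTpnn : ∀ k i j, 0 ≤ (T ^ k) i j := by
    intro k
    induction k with
    | zero => intro i j; simp [Matrix.one_apply]; positivity
    | succ k ih =>
      intro i j
      rw [pow_succ, Matrix.mul_apply]
      exact Finset.sum_nonneg fun m _ => mul_nonneg (ih i m) (hTnn m j)
  have hTprow : ∀ k i, ∑ j, (T ^ k) i j = 1 := by
    intro k
    induction k with
    | zero => intro i; simp [Matrix.one_apply]
    | succ k ih =>
      intro i
      simp only [pow_succ, Matrix.mul_apply]
      rw [Finset.sum_comm]
      simp only [← Finset.mul_sum]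
      simp only [hTrow, mul_one]
      exact ih i
  have hTdiag : ∀ i, T i i = α := by
    intro i
    rw [hTentry]
    simp
  have hTadj : ∀ i j, G.Adj i j → 0 < T i j := by
    intro i j h
    rw [hTentry]
    have h2 : (G.adjMatrix ℝ) i j = 1 := by simp [h]
    rw [h2]
    have : (i = j) = False := by simp [G.ne_of_adj h]
    simp [this]
    have := hdegR i
    positivity
  have hTppos : ∀ k i j, G.dist i j ≤ k → 0 < (T ^ k) i j := by
    intro k
    induction k with
    | zero =>
      intro i j hd
      have : i = j := (hconn.dist_eq_zero_iff).mp (Nat.le_zero.mp hd)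
      subst this
      simp [Matrix.one_apply]
    | succ k ih =>
      intro i j hd
      by_cases hk : G.dist i j ≤ k
      · have hpos : 0 < T i i * (T ^ k) i j := mul_pos (by rw [hTdiag]; exact hα0) (ih i j hk)
        have hle : T i i * (T ^ k) i j ≤ ∑ m, T i m * (T ^ k) m j :=
          Finset.single_le_sum (f := fun m => T i m * (T ^ k) m j)
            (fun m _ => mul_nonneg (hTnn i m) (hTpnn k m j)) (Finset.mem_univ i)
        rw [pow_succ', Matrix.mul_apply]
        linarith
      · have hdk : G.dist i j = k + 1 := le_antisymm hd (by omega)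
        obtain ⟨p, hp⟩ := (hconn i j).exists_walk_length_eq_dist
        rw [hdk] at hp
        cases p with
        | nil => simp at hp
        | cons hadj p' =>
          rename_i m
          have hp' : p'.length = k := by simpa using hp
          have hdm : G.dist m j ≤ k := hp' ▸ SimpleGraph.dist_le p'
          have hpos : 0 < T i m * (T ^ k) m j := mul_pos (hTadj i m hadj) (ih m j hdm)
          have hle : T i m * (T ^ k) m j ≤ ∑ m', T i m' * (T ^ k) m' j :=
            Finset.single_le_sum (f := fun m' => T i m' * (T ^ k) m' j)
              (fun m' _ => mul_nonneg (hTnn i m') (hTpnn k m' j)) (Finset.mem_univ m)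
          rw [pow_succ', Matrix.mul_apply]
          linarith
  -- all entries of T^(n-1) are positive
  set N : ℕ := n - 1 with hN
  have hTNpos : ∀ i j, 0 < (T ^ N) i j := by
    intro i j
    refine hTppos N i j ?_
    obtain ⟨p, hp⟩ := (hconn i j).exists_walk_length_eq_dist
    have hlt : (p.toPath : G.Walk i j).length < n := by
      simpa using (p.toPath.2.length_lt)
    have hle := SimpleGraph.dist_le (p.toPath : G.Walk i j)
    omega
  -- the minimal entry δ of T^N
  obtain ⟨p0, -, hmin⟩ := Finset.exists_min_image Finset.univ
    (fun p : Fin n × Fin n => (T ^ N) p.1 p.2) ⟨(Classical.arbitrary _, Classical.arbitrary _),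
      Finset.mem_univ _⟩
  set δ : ℝ := (T ^ N) p0.1 p0.2 with hδdef
  have hδpos : 0 < δ := hTNpos _ _
  have hδle : ∀ i j, δ ≤ (T ^ N) i j := fun i j => hmin (i, j) (Finset.mem_univ _)
  set c : ℝ := 1 - n * δ with hc
  have hc1 : c < 1 := by
    have : (0:ℝ) < n * δ := by
      have : (0:ℝ) < n := by exact_mod_cast hn
      positivity
    rw [hc]; linarith
  have hc0 : 0 ≤ c := by
    have h1 := hTprow N p0.1
    have h2 : ∑ j, δ ≤ ∑ j, (T ^ N) p0.1 j := Finset.sum_le_sum fun j _ => hδle _ j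
    rw [h1] at h2
    simp only [Finset.sum_const, Finset.card_univ, Fintype.card_fin, nsmul_eq_mul] at h2
    rw [hc]; linarith
  -- the limit row vector w and the difference vector e
  set r : Fin n → ℝ := fun j => 𝔾 u j - 𝔾 v j with hr
  set w : Fin n → ℝ := fun j => (1 - α)⁻¹ * (𝔾 u j - 𝔾 v j) with hw
  set e : Fin n → ℝ := fun j => (if u = j then (1:ℝ) else 0) - (if v = j then 1 else 0) with he
  have hrsum : ∑ i, r i = 0 := by
    simp only [hr, Finset.sum_sub_distrib, hG2]
    ring
  have hwsum : ∑ i, w i = 0 := by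
    have h := hrsum
    simp only [hr, Finset.sum_sub_distrib] at h
    simp only [hw, ← Finset.mul_sum, Finset.sum_sub_distrib, h, mul_zero]
  -- key identity : w ᵥ* (1 - T) = e
  have hrP : ∀ j, ∑ i, r i * ((1 : Matrix (Fin n) (Fin n) ℝ) - P) i j = e j := by
    intro j
    simp only [hr, sub_mul, Finset.sum_sub_distrib, ← Matrix.mul_apply, hG1, he]
    try ring
  have h1T : ∀ i j, ((1 : Matrix (Fin n) (Fin n) ℝ) - T) i j
      = (1 - α) * (((1 : Matrix (Fin n) (Fin n) ℝ) - P) i j) := by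
    intro i j
    rw [hT]
    simp only [Matrix.sub_apply, Matrix.add_apply, Matrix.smul_apply, Matrix.one_apply,
      smul_eq_mul]
    ring
  have hkey : ∀ j, Matrix.vecMul w T j = w j - e j := by
    intro j
    have hb : Matrix.vecMul w T j = ∑ i, w i * T i j := by
      simp [Matrix.vecMul, dotProduct]
    have ha : w j = ∑ i, w i * (1 : Matrix (Fin n) (Fin n) ℝ) i j := by
      simp [Matrix.one_apply, mul_ite, Finset.sum_ite_eq']
    have h4 : w j - Matrix.vecMul w T j
        = ∑ i, w i * ((1 : Matrix (Fin n) (Fin n) ℝ) - T) i j := by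
      rw [hb]
      simp only [Matrix.sub_apply, mul_sub, Finset.sum_sub_distrib]
      rw [← ha]
    have h5 : ∀ i, w i * ((1 : Matrix (Fin n) (Fin n) ℝ) - T) i j
        = r i * ((1 : Matrix (Fin n) (Fin n) ℝ) - P) i j := by
      intro i
      rw [h1T]
      simp only [hw, hr]
      field_simp
    have h6 : w j - Matrix.vecMul w T j = e j := by
      rw [h4, Finset.sum_congr rfl fun i _ => h5 i]
      exact hrP j
    linarith [h6]
  -- the iterates S m = w ᵥ* T^m
  set S : ℕ → Fin n → ℝ := fun m => Matrix.vecMul w (T ^ m) with hS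
  have hS0 : S 0 = w := by
    show Matrix.vecMul w (T ^ 0) = w
    rw [pow_zero, Matrix.vecMul_one]
  have hSsucc : ∀ m, S (m + 1) = Matrix.vecMul (Matrix.vecMul w T) (T ^ m) := by
    intro m
    show Matrix.vecMul w (T ^ (m + 1)) = _
    rw [pow_succ', ← Matrix.vecMul_vecMul]
  have hSstep : ∀ m, S (m + 1) = Matrix.vecMul (S m) T := by
    intro m
    show Matrix.vecMul w (T ^ (m + 1)) = Matrix.vecMul (Matrix.vecMul w (T ^ m)) T
    rw [pow_succ, ← Matrix.vecMul_vecMul]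
  have hvecMulApp : ∀ (x : Fin n → ℝ) (M : Matrix (Fin n) (Fin n) ℝ) j,
      Matrix.vecMul x M j = ∑ i, x i * M i j := by
    intro x M j; simp [Matrix.vecMul, dotProduct]
  -- entrywise telescoping
  have hestep : ∀ m j, (T ^ m) u j - (T ^ m) v j = S m j - S (m + 1) j := by
    intro m j
    have hA : S m j = ∑ i, w i * (T ^ m) i j := hvecMulApp w (T ^ m) j
    rw [hSsucc m, hvecMulApp, hA, ← Finset.sum_sub_distrib]
    have h7 : ∀ i, w i * (T ^ m) i j - Matrix.vecMul w T i * (T ^ m) i j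
        = e i * (T ^ m) i j := by
      intro i; rw [hkey i]; ring
    rw [Finset.sum_congr rfl fun i _ => h7 i]
    simp only [he, sub_mul, ite_mul, one_mul, zero_mul, Finset.sum_sub_distrib,
      Finset.sum_ite_eq, Finset.mem_univ, if_true]
  have hHeS : ∀ k j, He k u j - He k v j = w j - S (k + 1) j := by
    intro k j
    rw [hHe k u j, hHe k v j, ← Finset.sum_sub_distrib,
      Finset.sum_congr rfl fun t _ => hestep t j,
      Finset.sum_range_sub' (fun t => S t j) (k + 1), hS0]
  -- the L¹ norms g m and their geometric decay
  set g : ℕ → ℝ := fun m => ∑ j, |S m j| with hg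
  have hgnn : ∀ m, 0 ≤ g m := fun m => Finset.sum_nonneg fun j _ => abs_nonneg _
  have hSsum : ∀ m, ∑ j, S m j = 0 := by
    intro m
    rw [Finset.sum_congr rfl fun j _ => hvecMulApp w (T ^ m) j, Finset.sum_comm]
    simp only [← Finset.mul_sum, hTprow, mul_one]
    exact hwsum
  have hgmono : ∀ m, g (m + 1) ≤ g m := by
    intro m
    have h8 := dsd_contract T 0 (fun i j => hTnn i j) hTrow (S m) (hSsum m)
    show ∑ j, |S (m + 1) j| ≤ ∑ j, |S m j|
    rw [hSstep m]
    simpa using h8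
  have hgN : ∀ m, g (m + N) ≤ c * g m := by
    intro m
    have h1 : S (m + N) = Matrix.vecMul (S m) (T ^ N) := by
      show Matrix.vecMul w (T ^ (m + N)) = _
      rw [pow_add, ← Matrix.vecMul_vecMul]
    have h8 := dsd_contract (T ^ N) δ hδle (hTprow N) (S m) (hSsum m)
    show ∑ j, |S (m + N) j| ≤ c * ∑ j, |S m j|
    rw [h1]
    exact h8
  have hgeom : ∀ k, g (k * N) ≤ c ^ k * g 0 := by
    intro k
    induction k with
    | zero => simp
    | succ k ih =>
      have h1 : (k + 1) * N = k * N + N := by ring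
      rw [h1]
      calc g (k * N + N) ≤ c * g (k * N) := hgN _
        _ ≤ c * (c ^ k * g 0) := mul_le_mul_of_nonneg_left ih hc0
        _ = c ^ (k + 1) * g 0 := by ring
  have hanti : Antitone g := antitone_nat_of_succ_le hgmono
  have hgtend : Filter.Tendsto g Filter.atTop (nhds 0) := by
    rw [Metric.tendsto_atTop]
    intro ε hε
    have hc' : Filter.Tendsto (fun k => c ^ k * g 0) Filter.atTop (nhds 0) := by
      simpa using (tendsto_pow_atTop_nhds_zero_of_lt_one hc0 hc1).mul_const (g 0)
    obtain ⟨k0, hk0⟩ := (hc'.eventually (gt_mem_nhds hε)).exists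
    refine ⟨k0 * N, fun m hm => ?_⟩
    rw [Real.dist_eq, sub_zero, abs_of_nonneg (hgnn m)]
    calc g m ≤ g (k0 * N) := hanti hm
      _ ≤ c ^ k0 * g 0 := hgeom k0
      _ < ε := hk0
  have hStend : ∀ j, Filter.Tendsto (fun m => S m j) Filter.atTop (nhds 0) := by
    intro j
    refine squeeze_zero_norm (fun m => ?_) hgtend
    rw [Real.norm_eq_abs]
    exact Finset.single_le_sum (f := fun j => |S m j|) (fun j _ => abs_nonneg _)
      (Finset.mem_univ j)
  have hpt : ∀ j, Filter.Tendsto (fun k => He k u j - He k v j) Filter.atTop (nhds (w j)) := by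
    intro j
    have h1 : Filter.Tendsto (fun k : ℕ => S (k + 1) j) Filter.atTop (nhds 0) :=
      (hStend j).comp (Filter.tendsto_add_atTop_nat 1)
    have h2 : Filter.Tendsto (fun k : ℕ => w j - S (k + 1) j) Filter.atTop (nhds (w j - 0)) :=
      tendsto_const_nhds.sub h1
    rw [sub_zero] at h2
    exact h2.congr fun k => (hHeS k j).symm
  -- assemble
  have h0q : 0 < q := lt_of_lt_of_le one_pos hq
  have hq0 : q ≠ 0 := ne_of_gt h0q
  have hsumtend : Filter.Tendsto (fun k => ∑ j, |He k u j - He k v j| ^ q)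
      Filter.atTop (nhds (∑ j, |w j| ^ q)) := by
    refine tendsto_finset_sum _ fun j _ => ?_
    have hcont : ContinuousAt (fun x : ℝ => |x| ^ q) (w j) := by
      have hc1 : ContinuousAt (fun y : ℝ => y ^ q) |w j| :=
        Real.continuousAt_rpow_const _ q (Or.inr (le_of_lt h0q))
      exact hc1.comp continuous_abs.continuousAt
    exact hcont.tendsto.comp (hpt j)
  have houter : Filter.Tendsto (fun k => (∑ j, |He k u j - He k v j| ^ q) ^ (1/q))
      Filter.atTop (nhds ((∑ j, |w j| ^ q) ^ (1/q))) := by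
    have hcont : ContinuousAt (fun x : ℝ => x ^ (1/q)) (∑ j, |w j| ^ q) :=
      Real.continuousAt_rpow_const _ (1/q) (Or.inr (by positivity))
    exact hcont.tendsto.comp hsumtend
  have hval : (∑ j, |w j| ^ q) ^ (1/q)
      = (1 - α)⁻¹ * (∑ j, |𝔾 u j - 𝔾 v j| ^ q) ^ (1/q) := by
    have hinv : (0:ℝ) < (1 - α)⁻¹ := inv_pos.mpr h1α
    have h1 : ∀ j, |w j| ^ q = ((1 - α)⁻¹) ^ q * |𝔾 u j - 𝔾 v j| ^ q := by
      intro j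
      show |(1 - α)⁻¹ * (𝔾 u j - 𝔾 v j)| ^ q = _
      rw [abs_mul, abs_of_pos hinv]
      exact Real.mul_rpow (le_of_lt hinv) (abs_nonneg _)
    rw [Finset.sum_congr rfl fun j _ => h1 j, ← Finset.mul_sum,
      Real.mul_rpow (by positivity) (by positivity)]
    congr 1
    rw [← Real.rpow_mul (le_of_lt hinv), mul_one_div_cancel hq0, Real.rpow_one]
  rw [← hval]
  exact houter
end

section
/- Let G be a finite connected simple undirected graph and α ∈ (0,1). Then for all vertices u, v, j, the limit lim_{k→∞} (He^{{k}}_α(u,j) − He^{{k}}_α(v,j)) exists and equals (1/(1−α)) (𝔾(u,j) − 𝔾(v,j)), where 𝔾 is the Green's function of G. -/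
open Finset Matrix Filter

set_option linter.unusedSectionVars false

namespace LWVaux

variable {n : ℕ} [NeZero n]

noncomputable def osc (f : Fin n → ℝ) : ℝ :=
  Finset.univ.sup' Finset.univ_nonempty f - Finset.univ.inf' Finset.univ_nonempty f

lemma inf_le_ap (f : Fin n → ℝ) (x : Fin n) : Finset.univ.inf' Finset.univ_nonempty f ≤ f x :=
  Finset.inf'_le _ (Finset.mem_univ x)

lemma ap_le_sup (f : Fin n → ℝ) (x : Fin n) : f x ≤ Finset.univ.sup' Finset.univ_nonempty f :=
  Finset.le_sup' _ (Finset.mem_univ x)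

lemma osc_nonneg (f : Fin n → ℝ) : 0 ≤ osc f := by
  have x0 : Fin n := ⟨0, Nat.pos_of_ne_zero (NeZero.ne n)⟩
  have := le_trans (inf_le_ap f x0) (ap_le_sup f x0)
  simp only [osc]; linarith

lemma sub_le_osc (f : Fin n → ℝ) (x y : Fin n) : f x - f y ≤ osc f := by
  have h1 := ap_le_sup f x
  have h2 := inf_le_ap f y
  simp only [osc]; linarith

lemma contract (M : Matrix (Fin n) (Fin n) ℝ) (δ : ℝ)
    (hδ : ∀ x y, δ ≤ M x y) (h1 : ∀ x, ∑ y, M x y = 1) (f : Fin n → ℝ) :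
    osc (M.mulVec f) ≤ (1 - n * δ) * osc f := by
  have x0 : Fin n := ⟨0, Nat.pos_of_ne_zero (NeZero.ne n)⟩
  have hnd : (n : ℝ) * δ ≤ 1 := by
    have : ∑ _y : Fin n, δ ≤ ∑ y, M x0 y := Finset.sum_le_sum fun y _ => hδ x0 y
    rw [h1 x0] at this; simpa using this
  set s := Finset.univ.sup' Finset.univ_nonempty f with hs
  set i := Finset.univ.inf' Finset.univ_nonempty f with hi
  have key : ∀ x y : Fin n, M.mulVec f x - M.mulVec f y ≤ (1 - n * δ) * (s - i) := by
    intro x y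
    have hrow : ∀ z : Fin n, ∑ w, (M z w - δ) = 1 - n * δ := by
      intro z
      rw [Finset.sum_sub_distrib, h1 z]; simp
    have hup : M.mulVec f x ≤ (1 - n * δ) * s + δ * ∑ w, f w := by
      have : M.mulVec f x = ∑ w, (M x w - δ) * f w + δ * ∑ w, f w := by
        simp only [Matrix.mulVec, dotProduct, Finset.mul_sum]
        rw [← Finset.sum_add_distrib]
        congr 1; funext w; ring
      rw [this]
      have : ∑ w, (M x w - δ) * f w ≤ ∑ w, (M x w - δ) * s :=
        Finset.sum_le_sum fun w _ =>
          mul_le_mul_of_nonneg_left (ap_le_sup f w) (by linarith [hδ x w])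
      calc ∑ w, (M x w - δ) * f w + δ * ∑ w, f w
          ≤ ∑ w, (M x w - δ) * s + δ * ∑ w, f w := by linarith
        _ = (1 - n * δ) * s + δ * ∑ w, f w := by rw [← Finset.sum_mul, hrow x]
    have hlo : (1 - n * δ) * i + δ * ∑ w, f w ≤ M.mulVec f y := by
      have e : M.mulVec f y = ∑ w, (M y w - δ) * f w + δ * ∑ w, f w := by
        simp only [Matrix.mulVec, dotProduct, Finset.mul_sum]
        rw [← Finset.sum_add_distrib]
        congr 1; funext w; ring
      rw [e]
      have : ∑ w, (M y w - δ) * i ≤ ∑ w, (M y w - δ) * f w :=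
        Finset.sum_le_sum fun w _ =>
          mul_le_mul_of_nonneg_left (inf_le_ap f w) (by linarith [hδ y w])
      have e2 : ∑ w, (M y w - δ) * i = (1 - n * δ) * i := by rw [← Finset.sum_mul, hrow y]
      linarith
    have : M.mulVec f x - M.mulVec f y ≤ (1 - n*δ) * s - (1 - n*δ) * i := by linarith
    linarith [this, mul_sub (1 - (n:ℝ)*δ) s i]
  obtain ⟨x, -, hx⟩ := Finset.exists_mem_eq_sup' (Finset.univ_nonempty) (M.mulVec f)
  obtain ⟨y, -, hy⟩ := Finset.exists_mem_eq_inf' (Finset.univ_nonempty) (M.mulVec f)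
  simpa only [osc, ← hx, ← hy] using key x y

lemma pow_nonneg (M : Matrix (Fin n) (Fin n) ℝ) (h0 : ∀ x y, 0 ≤ M x y) (k : ℕ) :
    ∀ x y, 0 ≤ (M ^ k) x y := by
  induction k with
  | zero => intro x y; simp [Matrix.one_apply]; positivity
  | succ k ih =>
    intro x y
    rw [pow_succ, Matrix.mul_apply]
    exact Finset.sum_nonneg fun z _ => mul_nonneg (ih x z) (h0 z y)

lemma pow_rowsum (M : Matrix (Fin n) (Fin n) ℝ) (h1 : ∀ x, ∑ y, M x y = 1) (k : ℕ) :
    ∀ x, ∑ y, (M ^ k) x y = 1 := by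
  induction k with
  | zero => intro x; simp [Matrix.one_apply]
  | succ k ih =>
    intro x
    simp only [pow_succ, Matrix.mul_apply]
    rw [Finset.sum_comm]
    calc ∑ z, ∑ y, (M ^ k) x z * M z y = ∑ z, (M ^ k) x z * ∑ y, M z y := by
          simp [Finset.mul_sum]
      _ = 1 := by simp only [h1]; simpa using ih x

end LWVaux



/-- For a finite connected simple graph `G` and `α ∈ (0,1)`, for all vertices
`u, v, j`, the limit `lim_{k→∞} (He^{(k)}_α(u,j) − He^{(k)}_α(v,j))` exists and equals
`(1/(1−α)) (𝔾(u,j) − 𝔾(v,j))`, where `𝔾` is the Green's function of `G`. -/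
theorem lazy_walk_visits_difference_limit
    (n : ℕ) (G : SimpleGraph (Fin n)) [DecidableRel G.Adj]
    (hconn : G.Connected)
    (α : ℝ) (hα : α ∈ Set.Ioo (0 : ℝ) 1)
    -- the α-lazy random walk transition matrix `T_α = αI + (1−α)D⁻¹A`
    (T : Matrix (Fin n) (Fin n) ℝ)
    (hT : T = α • (1 : Matrix (Fin n) (Fin n) ℝ)
        + (1 - α) • ((Matrix.diagonal fun i => ((G.degree i : ℝ))⁻¹) * G.adjMatrix ℝ))
    -- `He k u j = Σ_{t=0}^{k} (T_α^t)(u,j)`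
    (He : ℕ → Fin n → Fin n → ℝ)
    (hHe : ∀ k u j, He k u j = ∑ t ∈ Finset.range (k + 1), (T ^ t) u j)
    -- the Green's function `𝔾` of `G`
    (𝔾 : Matrix (Fin n) (Fin n) ℝ)
    (hG1 : ∀ x y : Fin n,
      (𝔾 * (1 - (Matrix.diagonal fun i => ((G.degree i : ℝ))⁻¹) * G.adjMatrix ℝ)) x y
        = (if x = y then (1 : ℝ) else 0) - (G.degree y : ℝ) / ∑ i, (G.degree i : ℝ))
    (hG2 : ∀ x : Fin n, ∑ y, 𝔾 x y = 0)
    (u v j : Fin n) :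
    Filter.Tendsto (fun k : ℕ => He k u j - He k v j) Filter.atTop
      (nhds ((1 / (1 - α)) * (𝔾 u j - 𝔾 v j))) := by
  obtain ⟨hα0, hα1⟩ := hα
  have h1α : (0:ℝ) < 1 - α := by linarith
  have hn : 0 < n := u.pos
  haveI : NeZero n := ⟨hn.ne'⟩
  by_cases hdeg : ∀ x : Fin n, 0 < G.degree x
  case neg =>
    -- degenerate case: some vertex has degree 0; hypotheses are contradictory
    push_neg at hdeg
    obtain ⟨x, hx⟩ := hdeg
    replace hx : G.degree x = 0 := by omega
    have hnoadj : ∀ z, ¬ G.Adj x z := by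
      intro z hz
      have hmem : z ∈ G.neighborFinset x := by simpa [SimpleGraph.mem_neighborFinset] using hz
      rw [SimpleGraph.degree, Finset.card_eq_zero] at hx
      simp [hx] at hmem
    have hall : ∀ y : Fin n, y = x := by
      intro y
      obtain ⟨w⟩ := (hconn x y)
      cases w with
      | nil => rfl
      | cons h p => exact absurd h (hnoadj _)
    have hA : G.adjMatrix ℝ = 0 := by
      ext a b
      have ha := hall a; have hb := hall b
      subst ha; subst hb
      simp
    have h11 := hG1 x x
    rw [hA] at h11
    simp only [Matrix.mul_zero, mul_zero, sub_zero, Matrix.mul_one, if_pos rfl] at h11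
    have hdall : ∀ i : Fin n, G.degree i = 0 := fun i => by rw [hall i]; exact hx
    have hsum0 : (∑ i, (G.degree i : ℝ)) = 0 := by simp [hdall]
    rw [hsum0] at h11
    have h2 := hG2 x
    have hsumone : ∑ y, 𝔾 x y = 𝔾 x x := by
      apply Finset.sum_eq_single x
      · intro b _ hb; exact absurd (hall b) hb
      · intro h; exact absurd (Finset.mem_univ x) h
    rw [hsumone] at h2
    rw [h2] at h11
    norm_num at h11
  case pos =>
  have hdR : ∀ x : Fin n, (0:ℝ) < (G.degree x : ℝ) := fun x => by exact_mod_cast hdeg x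
  -- entry formula for T
  have hTapp : ∀ x y, T x y = α * (if x = y then 1 else 0)
      + (1 - α) * ((G.degree x : ℝ)⁻¹ * (if G.Adj x y then 1 else 0)) := by
    intro x y
    rw [hT]
    simp only [Matrix.add_apply, Matrix.smul_apply, Matrix.one_apply, smul_eq_mul,
      Matrix.diagonal_mul, SimpleGraph.adjMatrix_apply]
  have hrowadj : ∀ x : Fin n, ∑ y, ((if G.Adj x y then (1:ℝ) else 0)) = G.degree x := by
    intro x
    have := G.adjMatrix_mulVec_const_apply (α := ℝ) (a := 1) (v := x)
    simpa [Matrix.mulVec, dotProduct, SimpleGraph.adjMatrix_apply] using this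
  have hT0 : ∀ x y, 0 ≤ T x y := by
    intro x y
    rw [hTapp]
    have := (hdR x).le
    positivity
  have hT1 : ∀ x, ∑ y, T x y = 1 := by
    intro x
    simp only [hTapp]
    rw [Finset.sum_add_distrib]
    have e1 : ∑ y, α * (if x = y then (1:ℝ) else 0) = α := by simp
    have e2 : ∑ y, (1 - α) * ((G.degree x : ℝ)⁻¹ * (if G.Adj x y then (1:ℝ) else 0))
        = (1 - α) := by
      rw [← Finset.mul_sum, ← Finset.mul_sum, hrowadj x, inv_mul_cancel₀ (hdR x).ne', mul_one]
    rw [e1, e2]; ring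
  have hTdiag : ∀ x, 0 < T x x := by
    intro x
    rw [hTapp]
    simp [G.irrefl]
    linarith
  have hTadj : ∀ x y, G.Adj x y → 0 < T x y := by
    intro x y h
    rw [hTapp]
    have hxy : x ≠ y := G.ne_of_adj h
    simp only [if_neg hxy, if_pos h, mul_zero, mul_one, zero_add]
    exact mul_pos h1α (inv_pos.mpr (hdR x))
  -- nonnegativity and row sums of powers
  have hTp0 : ∀ (k : ℕ) (x y : Fin n), 0 ≤ (T ^ k) x y := fun k => LWVaux.pow_nonneg T hT0 k
  have hTp1 : ∀ (k : ℕ) (x : Fin n), ∑ y, (T ^ k) x y = 1 := fun k => LWVaux.pow_rowsum T hT1 k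
  -- positivity along walks
  have hwalk : ∀ (x y : Fin n) (w : G.Walk x y), 0 < (T ^ w.length) x y := by
    intro x y w
    induction w with
    | nil => simp [Matrix.one_apply]
    | @cons a b c hab p ih =>
      rw [SimpleGraph.Walk.length_cons, pow_succ', Matrix.mul_apply]
      have hterm : 0 < T a b * (T ^ p.length) b c := mul_pos (hTadj _ _ hab) ih
      refine lt_of_lt_of_le hterm (Finset.single_le_sum
        (fun z _ => mul_nonneg (hT0 a z) (hTp0 p.length z c)) (Finset.mem_univ b))
  have hmono : ∀ (x y : Fin n) (k l : ℕ), k ≤ l → 0 < (T ^ k) x y → 0 < (T ^ l) x y := by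
    intro x y k l hkl hpos
    induction l, hkl using Nat.le_induction with
    | base => exact hpos
    | succ l hkl ih =>
      rw [pow_succ', Matrix.mul_apply]
      refine lt_of_lt_of_le (mul_pos (hTdiag x) ih) (Finset.single_le_sum
        (fun z _ => mul_nonneg (hT0 x z) (hTp0 l z y)) (Finset.mem_univ x))
  have hex : ∀ x y : Fin n, ∃ k, 0 < (T ^ k) x y := by
    intro x y
    obtain ⟨w⟩ := hconn x y
    exact ⟨w.length, hwalk x y w⟩
  choose F hF using hex
  set m : ℕ := Finset.univ.sup (fun p : Fin n × Fin n => F p.1 p.2) with hm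
  have hTm : ∀ x y, 0 < (T ^ m) x y := fun x y =>
    hmono x y (F x y) m (Finset.le_sup (f := fun p : Fin n × Fin n => F p.1 p.2)
      (Finset.mem_univ (x, y))) (hF x y)
  have hne : (Finset.univ : Finset (Fin n × Fin n)).Nonempty := Finset.univ_nonempty
  set δ : ℝ := Finset.univ.inf' hne (fun p : Fin n × Fin n => (T ^ m) p.1 p.2) with hδdef
  have hδpos : 0 < δ := by
    rw [hδdef]
    exact (Finset.lt_inf'_iff _).mpr (fun p _ => hTm p.1 p.2)
  have hδle : ∀ x y, δ ≤ (T ^ m) x y := fun x y =>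
    Finset.inf'_le _ (Finset.mem_univ (x, y))
  -- the oscillation sequence
  set f : ℕ → Fin n → ℝ := fun k y => (T ^ k) y j with hfdef
  set o : ℕ → ℝ := fun k => LWVaux.osc (f k) with hodef
  have hfstep : ∀ (l k : ℕ), f (l + k) = (T ^ l).mulVec (f k) := by
    intro l k; funext y
    simp only [hfdef, pow_add, Matrix.mul_apply, Matrix.mulVec, dotProduct]
  have ho0 : ∀ k, 0 ≤ o k := fun k => LWVaux.osc_nonneg _
  have hanti : ∀ k l, k ≤ l → o l ≤ o k := by
    intro k l hkl
    induction l, hkl using Nat.le_induction with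
    | base => exact le_refl _
    | succ l hkl ih =>
      have : o (l + 1) ≤ (1 - (n : ℝ) * 0) * o l := by
        have he : f (l + 1) = (T ^ 1).mulVec (f l) := by
          have := hfstep 1 l; rwa [Nat.add_comm 1 l] at this
        rw [hodef]; simp only []
        rw [he]
        exact LWVaux.contract (T ^ 1) 0 (fun x y => hTp0 1 x y) (hTp1 1) (f l)
      simp only [mul_zero, sub_zero, one_mul] at this
      linarith
  set c : ℝ := 1 - (n : ℝ) * δ with hc
  have hcontr : ∀ k, o (m + k) ≤ c * o k := by
    intro k
    rw [hodef]; simp only []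
    rw [hfstep m k]
    exact LWVaux.contract (T ^ m) δ hδle (hTp1 m) (f k)
  have hc0 : 0 ≤ c := by
    have : ∑ _y : Fin n, δ ≤ ∑ y, (T ^ m) u y := Finset.sum_le_sum fun y _ => hδle u y
    rw [hTp1 m u] at this
    simp only [Finset.sum_const, Finset.card_univ, Fintype.card_fin, nsmul_eq_mul] at this
    rw [hc]; linarith
  have hc1 : c < 1 := by
    have hn' : (1 : ℝ) ≤ (n : ℝ) := by exact_mod_cast hn
    rw [hc]
    nlinarith [hδpos]
  have hiter : ∀ q : ℕ, o (m * q) ≤ c ^ q * o 0 := by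
    intro q
    induction q with
    | zero => simp
    | succ q ih =>
      have h1 : o (m * (q + 1)) ≤ c * o (m * q) := by
        have : m * (q + 1) = m + m * q := by ring
        rw [this]; exact hcontr (m * q)
      calc o (m * (q + 1)) ≤ c * o (m * q) := h1
        _ ≤ c * (c ^ q * o 0) := mul_le_mul_of_nonneg_left ih hc0
        _ = c ^ (q + 1) * o 0 := by ring
  have hoconv : Filter.Tendsto o Filter.atTop (nhds 0) := by
    rw [Metric.tendsto_atTop]
    intro ε hε
    obtain ⟨q, hq⟩ : ∃ q, c ^ q * o 0 < ε := by
      have ht : Filter.Tendsto (fun q : ℕ => c ^ q * o 0) Filter.atTop (nhds 0) := by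
        simpa using (tendsto_pow_atTop_nhds_zero_of_lt_one hc0 hc1).mul_const (o 0)
      exact (ht.eventually (gt_mem_nhds hε)).exists
    refine ⟨m * q, fun k hk => ?_⟩
    have h1 : o k ≤ o (m * q) := hanti _ _ hk
    have h2 := hiter q
    rw [Real.dist_eq, sub_zero, abs_of_nonneg (ho0 k)]
    linarith
  -- the error sequence E
  set E : ℕ → ℝ := fun k => (𝔾 * T ^ k) u j - (𝔾 * T ^ k) v j with hEdef
  set C : ℝ := (∑ y, |𝔾 u y|) + (∑ y, |𝔾 v y|) with hCdef
  have hrowbound : ∀ (x : Fin n) (k : ℕ), |(𝔾 * T ^ k) x j| ≤ (∑ y, |𝔾 x y|) * o k := by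
    intro x k
    set i0 : ℝ := Finset.univ.inf' Finset.univ_nonempty (f k) with hi0
    have hre : (𝔾 * T ^ k) x j = ∑ y, 𝔾 x y * (f k y - i0) := by
      rw [Matrix.mul_apply]
      have : ∑ y, 𝔾 x y * (f k y - i0) = ∑ y, 𝔾 x y * f k y - (∑ y, 𝔾 x y) * i0 := by
        rw [Finset.sum_mul, ← Finset.sum_sub_distrib]
        congr 1; funext y; ring
      rw [this, hG2 x, zero_mul, sub_zero]
    rw [hre]
    calc |∑ y, 𝔾 x y * (f k y - i0)| ≤ ∑ y, |𝔾 x y * (f k y - i0)| :=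
          Finset.abs_sum_le_sum_abs _ _
      _ ≤ ∑ y, |𝔾 x y| * o k := by
          refine Finset.sum_le_sum fun y _ => ?_
          rw [abs_mul]
          refine mul_le_mul_of_nonneg_left ?_ (abs_nonneg _)
          have h1 := LWVaux.inf_le_ap (f k) y
          have h2 := LWVaux.ap_le_sup (f k) y
          rw [abs_of_nonneg (by linarith)]
          simp only [hodef, LWVaux.osc]
          linarith
      _ = (∑ y, |𝔾 x y|) * o k := (Finset.sum_mul _ _ _).symm
  have hEbound : ∀ k, ‖E k‖ ≤ C * o k := by
    intro k
    rw [Real.norm_eq_abs, hEdef]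
    calc |(𝔾 * T ^ k) u j - (𝔾 * T ^ k) v j|
        ≤ |(𝔾 * T ^ k) u j| + |(𝔾 * T ^ k) v j| := abs_sub _ _
      _ ≤ (∑ y, |𝔾 u y|) * o k + (∑ y, |𝔾 v y|) * o k :=
          add_le_add (hrowbound u k) (hrowbound v k)
      _ = C * o k := by rw [hCdef]; ring
  have hE0 : Filter.Tendsto E Filter.atTop (nhds 0) :=
    squeeze_zero_norm hEbound (by simpa using hoconv.const_mul C)
  -- the algebraic identity
  set P : Matrix (Fin n) (Fin n) ℝ :=
    (Matrix.diagonal fun i => ((G.degree i : ℝ))⁻¹) * G.adjMatrix ℝ with hPdef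
  set Jm : Matrix (Fin n) (Fin n) ℝ :=
    Matrix.of (fun _ y => (G.degree y : ℝ) / ∑ i, (G.degree i : ℝ)) with hJmdef
  have hG1' : 𝔾 * (1 - P) = 1 - Jm := by
    ext x y
    rw [hG1 x y]
    simp [hJmdef, Matrix.sub_apply, Matrix.one_apply]
  have h1T : (1 : Matrix (Fin n) (Fin n) ℝ) - T = (1 - α) • (1 - P) := by
    rw [hT]
    module
  have hvol : ∀ y, ∑ z, (G.degree z : ℝ) * T z y = (G.degree y : ℝ) := by
    intro y
    have hterm : ∀ z, (G.degree z : ℝ) * T z y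
        = α * ((G.degree z : ℝ) * (if z = y then 1 else 0))
          + (1 - α) * (if G.Adj z y then 1 else 0) := by
      intro z
      rw [hTapp z y, mul_add]
      congr 1
      · ring
      · rw [show (G.degree z : ℝ) * ((1 - α) * ((G.degree z : ℝ)⁻¹ * (if G.Adj z y then 1 else 0)))
          = (1 - α) * (((G.degree z : ℝ) * (G.degree z : ℝ)⁻¹) * (if G.Adj z y then 1 else 0)) by ring,
          mul_inv_cancel₀ (hdR z).ne', one_mul]
    simp only [hterm]
    rw [Finset.sum_add_distrib, ← Finset.mul_sum, ← Finset.mul_sum]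
    have e1 : ∑ z, (G.degree z : ℝ) * (if z = y then (1:ℝ) else 0) = (G.degree y : ℝ) := by
      simp
    have e2 : ∑ z, (if G.Adj z y then (1:ℝ) else 0) = (G.degree y : ℝ) := by
      rw [← hrowadj y]
      apply Finset.sum_congr rfl
      intro z _
      simp [SimpleGraph.adj_comm]
    rw [e1, e2]
    ring
  have hJT : Jm * T = Jm := by
    ext x y
    rw [Matrix.mul_apply]
    simp only [hJmdef, Matrix.of_apply, div_mul_eq_mul_div]
    rw [← Finset.sum_div, hvol y]
  have hJTk : ∀ t : ℕ, Jm * T ^ t = Jm := by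
    intro t
    induction t with
    | zero => simp
    | succ t ih => rw [pow_succ, ← mul_assoc, ih, hJT]
  have hgeom : ∀ k : ℕ, (1 - T) * (∑ t ∈ Finset.range (k + 1), T ^ t) = 1 - T ^ (k + 1) := by
    intro k
    induction k with
    | zero => simp
    | succ k ih =>
      rw [Finset.sum_range_succ, mul_add, ih, sub_mul, one_mul, ← pow_succ']
      abel
  have hident : ∀ k : ℕ, 𝔾 - 𝔾 * T ^ (k + 1)
      = (1 - α) • ((∑ t ∈ Finset.range (k + 1), T ^ t) - ((k : ℝ) + 1) • Jm) := by
    intro k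
    have h1 : 𝔾 - 𝔾 * T ^ (k + 1) = 𝔾 * (1 - T ^ (k + 1)) := by rw [mul_sub, mul_one]
    have hJS : Jm * (∑ t ∈ Finset.range (k + 1), T ^ t) = ((k : ℝ) + 1) • Jm := by
      rw [Finset.mul_sum]
      simp only [hJTk]
      rw [Finset.sum_const, Finset.card_range, ← Nat.cast_smul_eq_nsmul ℝ]
      congr 1
      push_cast
      ring
    rw [h1, ← hgeom k, ← mul_assoc, show 𝔾 * (1 - T) = (1 - α) • (1 - Jm) by
        rw [h1T, mul_smul_comm, hG1'],
      smul_mul_assoc, sub_mul, one_mul, hJS]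
  -- convert to entries and conclude
  have hkey : ∀ k : ℕ, He k u j - He k v j
      = (1 / (1 - α)) * ((𝔾 u j - 𝔾 v j) - E (k + 1)) := by
    intro k
    have hu' : (𝔾 - 𝔾 * T ^ (k + 1)) u j
        = (1 - α) * ((∑ t ∈ Finset.range (k + 1), (T ^ t) u j) - ((k : ℝ) + 1) * Jm u j) := by
      rw [hident k]
      simp only [Matrix.smul_apply, Matrix.sub_apply, Matrix.sum_apply, smul_eq_mul]
    have hv' : (𝔾 - 𝔾 * T ^ (k + 1)) v j
        = (1 - α) * ((∑ t ∈ Finset.range (k + 1), (T ^ t) v j) - ((k : ℝ) + 1) * Jm v j) := by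
      rw [hident k]
      simp only [Matrix.smul_apply, Matrix.sub_apply, Matrix.sum_apply, smul_eq_mul]
    have hJuv : Jm u j = Jm v j := by simp [hJmdef]
    rw [Matrix.sub_apply] at hu' hv'
    rw [hHe, hHe, hEdef]
    have hne' : (1 - α) ≠ 0 := h1α.ne'
    field_simp
    rw [hJuv] at hu'
    linarith
  rw [show (fun k : ℕ => He k u j - He k v j)
      = fun k : ℕ => (1 / (1 - α)) * ((𝔾 u j - 𝔾 v j) - E (k + 1)) from funext hkey]
  have hE1 : Filter.Tendsto (fun k : ℕ => E (k + 1)) Filter.atTop (nhds 0) :=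
    hE0.comp (Filter.tendsto_add_atTop_nat 1)
  have hfin := ((tendsto_const_nhds (x := 𝔾 u j - 𝔾 v j)
      (f := Filter.atTop (α := ℕ))).sub hE1).const_mul (1 / (1 - α))
  simpa using hfin
end

section
/- Let G be a finite connected simple undirected graph with normalized Laplacian eigenvalues 0 = λ_0 < λ_1 ≤ … ≤ λ_{n−1}, maximum degree Δ and minimum degree δ. Then the spectral (operator) norm of the Green's function 𝔾 of G satisfies ‖𝔾‖ ≤ (1/λ_1) √(Δ/δ). -/
/-!
Conjugating by `D^{1/2}` turns `𝔾` into `M = D^{1/2} 𝔾 D^{-1/2}`, which satisfies `M 𝓛 = I - ψ ψᵀ`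
and `M ψ = 0` for the unit vector `ψ = D^{1/2} 𝟙 / √vol(G)`. In the orthonormal eigenbasis of `𝓛`
these two identities determine `M = ∑_{l ≠ 0} λ_l⁻¹ φ_l φ_lᵀ`, so `‖M‖ ≤ 1/λ_1`, and undoing the
conjugation costs at most `‖D^{-1/2}‖ ‖D^{1/2}‖ ≤ √(Δ/δ)`.
-/

open Matrix
open scoped Matrix.Norms.L2Operator

namespace Matrix

variable {ι K : Type*} [Fintype ι] [DecidableEq ι]

lemma of_mul_transpose_eq_one [CommSemiring K] {φ : ι → ι → K}
    (horth : ∀ l m, φ l ⬝ᵥ φ m = if l = m then 1 else 0) : of φ * (of φ)ᵀ = 1 := by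
  ext l m
  simpa [mul_apply, one_apply, dotProduct] using horth l m

lemma mul_transpose_of_eq_transpose_of_mul_diagonal [CommSemiring K] {L : Matrix ι ι K}
    {φ : ι → ι → K} {lam : ι → K} (heig : ∀ l, L *ᵥ φ l = lam l • φ l) :
    L * (of φ)ᵀ = (of φ)ᵀ * diagonal lam := by
  ext i l
  rw [mul_diagonal]
  simpa [mul_apply, mulVec, dotProduct, mul_comm] using congrFun (heig l) i

/-- Since `0⁻¹ = 0`, the right-hand side is the pseudo-inverse of `L = Φᵀ (diagonal lam) Φ`. -/
theorem eq_transpose_mul_diagonal_inv_mul [Field K] {Φ L M : Matrix ι ι K} {lam ψ : ι → K}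
    {i₀ : ι} (hΦ : Φ * Φᵀ = 1) (hL : L * Φᵀ = Φᵀ * diagonal lam) (hlam₀ : lam i₀ = 0)
    (hlam : ∀ l ≠ i₀, lam l ≠ 0) (hML : M * L = 1 - vecMulVec ψ ψ) (hMψ : M *ᵥ ψ = 0) :
    M = Φᵀ * diagonal lam⁻¹ * Φ := by
  have hΦ' : Φᵀ * Φ = 1 := mul_eq_one_comm.mp hΦ
  set N := Φ * M * Φᵀ
  set c := Φ *ᵥ ψ
  have hNlam : N * diagonal lam = 1 - vecMulVec c c := by
    calc N * diagonal lam = Φ * (M * L) * Φᵀ := by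
          simp only [N, Matrix.mul_assoc, ← hL]
    _ = 1 - vecMulVec c c := by
          rw [hML, Matrix.mul_sub, Matrix.sub_mul, Matrix.mul_one, hΦ, mul_vecMulVec,
            vecMulVec_mul, vecMul_transpose]
  have hNc : N *ᵥ c = 0 := by
    simp only [N, c, mulVec_mulVec, Matrix.mul_assoc, hΦ', Matrix.mul_one]
    rw [← mulVec_mulVec, hMψ, mulVec_zero]
  -- Column `i₀` of `hNlam` forces `c = ± Pi.single i₀ 1`.
  have hcol₀ : ∀ i, c i * c i₀ = if i = i₀ then 1 else 0 := fun i => by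
    have := congrFun (congrFun hNlam i) i₀
    simp only [mul_diagonal, hlam₀, mul_zero, sub_apply, one_apply, vecMulVec_apply] at this
    linear_combination this
  have hc₀ : c i₀ ≠ 0 := fun h => by simpa [h] using hcol₀ i₀
  have hc : ∀ i ≠ i₀, c i = 0 := fun i hi => by
    simpa [hi, hc₀] using hcol₀ i
  suffices hN : N = diagonal lam⁻¹ by
    calc M = Φᵀ * Φ * M * (Φᵀ * Φ) := by rw [hΦ', Matrix.one_mul, Matrix.mul_one]
    _ = Φᵀ * N * Φ := by simp only [N, Matrix.mul_assoc]
    _ = Φᵀ * diagonal lam⁻¹ * Φ := by rw [hN]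
  ext i j
  rcases eq_or_ne j i₀ with rfl | hj
  · have hNc_i := congrFun hNc i
    rw [mulVec, dotProduct, Finset.sum_eq_single j (fun k _ hk => by rw [hc k hk, mul_zero])
      (by simp)] at hNc_i
    rw [(mul_eq_zero_iff_right hc₀).mp hNc_i, diagonal_apply]
    split_ifs with h <;> simp [h, hlam₀]
  · have : N i j * lam j = if i = j then 1 else 0 := by
      simpa [hc j hj, one_apply, vecMulVec_apply] using congrFun (congrFun hNlam i) j
    rw [eq_div_of_mul_eq (hlam j hj) this, diagonal_apply]
    split_ifs with h <;> simp [h]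

lemma l2_opNorm_transpose_mul_mul_of_mul_transpose_eq_one {Φ : Matrix ι ι ℝ}
    (hΦ : Φ * Φᵀ = 1) (D : Matrix ι ι ℝ) : ‖Φᵀ * D * Φ‖ = ‖D‖ := by
  have hU : Φ ∈ unitary (Matrix ι ι ℝ) := (mem_unitaryGroup_iff (A := Φ)).mpr hΦ
  have hUt : Φᵀ ∈ unitary (Matrix ι ι ℝ) := by
    simpa [star_eq_conjTranspose] using Unitary.star_mem hU
  rw [CStarRing.norm_mul_mem_unitary _ hU, CStarRing.norm_mem_unitary_mul _ hUt]

lemma l2_opNorm_diagonal_le {v : ι → ℝ} {C : ℝ} (hC : 0 ≤ C) (hv : ∀ i, |v i| ≤ C) :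
    ‖diagonal v‖ ≤ C := by
  rw [l2_opNorm_diagonal]
  exact (pi_norm_le_iff_of_nonneg hC).mpr hv

theorem l2_opNorm_le_inv_of_mul_eq_one_sub_vecMulVec {Φ L M : Matrix ι ι ℝ} {lam ψ : ι → ℝ}
    {i₀ : ι} {γ : ℝ} (hΦ : Φ * Φᵀ = 1) (hL : L * Φᵀ = Φᵀ * diagonal lam) (hlam₀ : lam i₀ = 0)
    (hγ : 0 < γ) (hgap : ∀ l ≠ i₀, γ ≤ lam l) (hML : M * L = 1 - vecMulVec ψ ψ)
    (hMψ : M *ᵥ ψ = 0) : ‖M‖ ≤ γ⁻¹ := by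
  have hlam : ∀ l ≠ i₀, lam l ≠ 0 := fun l hl => (hγ.trans_le (hgap l hl)).ne'
  rw [eq_transpose_mul_diagonal_inv_mul hΦ hL hlam₀ hlam hML hMψ,
    l2_opNorm_transpose_mul_mul_of_mul_transpose_eq_one hΦ]
  refine l2_opNorm_diagonal_le (inv_nonneg.mpr hγ.le) fun l => ?_
  rcases eq_or_ne l i₀ with rfl | hl
  · simp [hlam₀, hγ.le]
  · rw [Pi.inv_apply, abs_inv, abs_of_pos (hγ.trans_le (hgap l hl))]
    exact inv_anti₀ hγ (hgap l hl)

end Matrix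

section Symmetrization

variable {V : Type*} [Fintype V] [DecidableEq V] {d : V → ℝ}

lemma diagonal_inv_sqrt_mul_diagonal_sqrt (hd : ∀ i, 0 < d i) :
    diagonal (fun i => (√(d i))⁻¹) * diagonal (fun i => √(d i)) = 1 := by
  rw [diagonal_mul_diagonal, ← diagonal_one]
  exact congrArg diagonal (funext fun i => inv_mul_cancel₀ (Real.sqrt_pos.mpr (hd i)).ne')

theorem conj_sqrt_mul_one_sub_eq_one_sub_vecMulVec (hd : ∀ i, 0 < d i) {A 𝔾 : Matrix V V ℝ}
    (hG : 𝔾 * (1 - diagonal (fun i => (d i)⁻¹) * A)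
      = 1 - vecMulVec 1 (fun y => d y / ∑ i, d i)) :
    diagonal (fun i => √(d i)) * 𝔾 * diagonal (fun i => (√(d i))⁻¹) *
        (1 - diagonal (fun i => (√(d i))⁻¹) * A * diagonal (fun i => (√(d i))⁻¹))
      = 1 - vecMulVec (fun i => √(d i) / √(∑ j, d j)) (fun i => √(d i) / √(∑ j, d j)) := by
  set S := diagonal fun i => √(d i)
  set S' := diagonal fun i => (√(d i))⁻¹
  have hsqrt : ∀ i, √(d i) ≠ 0 := fun i => (Real.sqrt_pos.mpr (hd i)).ne'
  have hS'S : S' * S = 1 := diagonal_inv_sqrt_mul_diagonal_sqrt hd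
  have hL : 1 - S' * A * S' = S * (1 - diagonal (fun i => (d i)⁻¹) * A) * S' := by
    have hSd : S * diagonal (fun i => (d i)⁻¹) = S' := by
      rw [diagonal_mul_diagonal]
      refine congrArg diagonal (funext fun i => ?_)
      rw [← div_eq_mul_inv, Real.sqrt_div_self', one_div]
    rw [Matrix.mul_sub, Matrix.sub_mul, Matrix.mul_one, ← mul_eq_one_comm.mp hS'S,
      ← Matrix.mul_assoc, hSd]
  have hvol : 0 ≤ ∑ j, d j := Finset.sum_nonneg fun i _ => (hd i).le
  calc S * 𝔾 * S' * (1 - S' * A * S')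
      = S * (𝔾 * (1 - diagonal (fun i => (d i)⁻¹) * A)) * S' := by
        rw [hL]
        simp only [Matrix.mul_assoc]
        rw [← Matrix.mul_assoc S' S, hS'S, Matrix.one_mul]
    _ = _ := by
        rw [hG]
        ext i j
        simp only [S, S', mul_diagonal, diagonal_mul, Matrix.sub_apply, one_apply,
          vecMulVec_apply, Pi.one_apply, div_mul_div_comm, Real.mul_self_sqrt hvol]
        rcases eq_or_ne i j with rfl | h
        · field_simp [hsqrt i]
          rw [Real.sq_sqrt (hd i).le]
        · simp only [if_neg h, zero_sub]
          field_simp [hsqrt j]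
          rw [Real.sq_sqrt (hd j).le]

theorem conj_sqrt_mulVec_sqrt_eq_zero (hd : ∀ i, 0 < d i) {𝔾 : Matrix V V ℝ}
    (h𝔾 : 𝔾 *ᵥ 1 = 0) :
    (diagonal (fun i => √(d i)) * 𝔾 * diagonal (fun i => (√(d i))⁻¹)) *ᵥ
      (fun i => √(d i) / √(∑ j, d j)) = 0 := by
  have hψ : diagonal (fun i => (√(d i))⁻¹) *ᵥ (fun i => √(d i) / √(∑ j, d j))
      = (√(∑ j, d j))⁻¹ • 1 := by
    ext i
    rw [mulVec_diagonal, Pi.smul_apply, Pi.one_apply, smul_eq_mul, mul_one,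
      div_eq_mul_inv, inv_mul_cancel_left₀ (Real.sqrt_pos.mpr (hd i)).ne']
  rw [← mulVec_mulVec, hψ, ← mulVec_mulVec, mulVec_smul, h𝔾, smul_zero, mulVec_zero]

end Symmetrization

/-- For a finite connected simple graph `G` with normalized Laplacian
eigenvalues `0 = λ_0 < λ_1 ≤ … ≤ λ_{n−1}`, maximum degree `Δ` and minimum degree `δ`, the
spectral (operator) norm of the Green's function `𝔾` satisfies `‖𝔾‖ ≤ (1/λ_1) √(Δ/δ)`. -/
theorem green_opNorm_le
    (n : ℕ) [NeZero n] (hn : 2 ≤ n)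
    (G : SimpleGraph (Fin n)) [DecidableRel G.Adj]
    (hconn : G.Connected)
    -- eigenvalues and orthonormal eigenbasis of `𝓛 = I − D^{−1/2} A D^{−1/2}`
    (lam : Fin n → ℝ) (φ : Fin n → Fin n → ℝ)
    (heig : ∀ l, Matrix.mulVec
        (1 - (Matrix.diagonal fun i => (Real.sqrt (G.degree i))⁻¹) * G.adjMatrix ℝ
           * (Matrix.diagonal fun i => (Real.sqrt (G.degree i))⁻¹)) (φ l)
      = lam l • φ l)
    (horth : ∀ l m, (∑ i, φ l i * φ m i) = if l = m then (1 : ℝ) else 0)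
    (hmono : Monotone lam) (hlam0 : lam 0 = 0) (hlam1 : 0 < lam 1)
    -- the Green's function `𝔾` of `G`
    (𝔾 : Matrix (Fin n) (Fin n) ℝ)
    (hG1 : ∀ x y : Fin n,
      (𝔾 * (1 - (Matrix.diagonal fun i => ((G.degree i : ℝ))⁻¹) * G.adjMatrix ℝ)) x y
        = (if x = y then (1 : ℝ) else 0) - (G.degree y : ℝ) / ∑ i, (G.degree i : ℝ))
    (hG2 : ∀ x : Fin n, ∑ y, 𝔾 x y = 0) :
    ‖Matrix.toEuclideanCLM (𝕜 := ℝ) 𝔾‖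
      ≤ (1 / lam 1) * Real.sqrt
          ((Finset.univ.sup' Finset.univ_nonempty (fun i => G.degree i) : ℝ)
            / (Finset.univ.inf' Finset.univ_nonempty (fun i => G.degree i) : ℝ)) := by
  have : Nontrivial (Fin n) := Fin.nontrivial_iff_two_le.mpr hn
  set d : Fin n → ℝ := fun i => (G.degree i : ℝ)
  have hd : ∀ i, 0 < d i := fun i =>
    Nat.cast_pos.mpr (hconn.preconnected.degree_pos_of_nontrivial i)
  set Δ := Finset.univ.sup' Finset.univ_nonempty d
  set δ := Finset.univ.inf' Finset.univ_nonempty d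
  have hδ : 0 < δ := (Finset.lt_inf'_iff _).mpr fun i _ => hd i
  set S := diagonal fun i => √(d i)
  set S' := diagonal fun i => (√(d i))⁻¹
  have hG : 𝔾 * (1 - diagonal (fun i => (d i)⁻¹) * G.adjMatrix ℝ)
      = 1 - vecMulVec 1 (fun y => d y / ∑ i, d i) := by
    ext x y
    simpa [one_apply, vecMulVec_apply] using hG1 x y
  have hM : ‖S * 𝔾 * S'‖ ≤ (lam 1)⁻¹ :=
    l2_opNorm_le_inv_of_mul_eq_one_sub_vecMulVec (of_mul_transpose_eq_one horth)
      (mul_transpose_of_eq_transpose_of_mul_diagonal heig) hlam0 hlam1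
      (fun l hl => hmono (Fin.one_le_of_ne_zero hl))
      (conj_sqrt_mul_one_sub_eq_one_sub_vecMulVec hd hG)
      (conj_sqrt_mulVec_sqrt_eq_zero hd (funext fun x => by simp [mulVec, dotProduct, hG2]))
  have hS' : ‖S'‖ ≤ (√δ)⁻¹ := l2_opNorm_diagonal_le (by positivity) fun i => by
    rw [abs_inv, abs_of_nonneg (Real.sqrt_nonneg _)]
    exact inv_anti₀ (Real.sqrt_pos.mpr hδ)
      (Real.sqrt_le_sqrt (Finset.inf'_le _ (Finset.mem_univ i)))
  have hS : ‖S‖ ≤ √Δ := l2_opNorm_diagonal_le (Real.sqrt_nonneg _) fun i => by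
    rw [abs_of_nonneg (Real.sqrt_nonneg _)]
    exact Real.sqrt_le_sqrt (Finset.le_sup' _ (Finset.mem_univ i))
  have h𝔾 : 𝔾 = S' * (S * 𝔾 * S') * S := by
    calc 𝔾 = S' * S * 𝔾 * (S' * S) := by
          rw [diagonal_inv_sqrt_mul_diagonal_sqrt hd, Matrix.one_mul, Matrix.mul_one]
      _ = S' * (S * 𝔾 * S') * S := by simp only [Matrix.mul_assoc]
  calc ‖toEuclideanCLM (𝕜 := ℝ) 𝔾‖ = ‖S' * (S * 𝔾 * S') * S‖ := by rw [← h𝔾]; rfl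
    _ ≤ ‖S'‖ * ‖S * 𝔾 * S'‖ * ‖S‖ :=
      (l2_opNorm_mul _ _).trans (by gcongr; exact l2_opNorm_mul _ _)
    _ ≤ (√δ)⁻¹ * (lam 1)⁻¹ * √Δ := by gcongr
    _ = (1 / lam 1) * √(Δ / δ) := by
      rw [Real.sqrt_div' _ hδ.le]
      ring
end

section
/- Let G be a finite connected simple undirected graph with normalized Laplacian eigenvalues 0 = λ_0 < λ_1 ≤ … ≤ λ_{n−1}, maximum degree Δ and minimum degree δ. Then for any two vertices u and v, DSD_2(u,v) ≤ (√2/λ_1) √(Δ/δ). -/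
/-!
Put `z = (1_u - 1_v) 𝔾 D^{-1/2}`. Conjugating by `D^{1/2}` turns `𝔾 (I - D⁻¹A) = I - 𝟙 dᵀ / vol`
into `𝓛 z = D^{-1/2} (1_u - 1_v)`, while `𝔾 𝟙 = 0` makes `z` orthogonal to `D^{1/2} 𝟙`, which
spans `ker 𝓛` and hence is proportional to `φ₀`. Expanding in the eigenbasis gives
`‖𝓛 z‖ ≥ λ₁ ‖z‖`, so `‖z‖² ≤ (1/d_u + 1/d_v) / λ₁² ≤ 2 / (δ λ₁²)`, and finally
`DSD₂(u,v)² = ∑ⱼ d_j z_j² ≤ Δ ‖z‖²`.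
-/

open Matrix

namespace Matrix

variable {ι : Type*} [Fintype ι]

theorem sum_dotProduct_mul_dotProduct_of_orthonormal [DecidableEq ι] {φ : ι → ι → ℝ}
    (horth : ∀ l m, φ l ⬝ᵥ φ m = if l = m then 1 else 0) (x y : ι → ℝ) :
    ∑ l, (φ l ⬝ᵥ x) * (φ l ⬝ᵥ y) = x ⬝ᵥ y := by
  have hP : of φ * (of φ)ᵀ = 1 := by
    ext l m
    simpa [mul_apply, one_apply, dotProduct] using horth l m
  have hPt : (of φ)ᵀ * of φ = 1 := mul_eq_one_comm.mp hP
  calc ∑ l, (φ l ⬝ᵥ x) * (φ l ⬝ᵥ y) = (of φ *ᵥ x) ⬝ᵥ (of φ *ᵥ y) := rfl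
    _ = x ⬝ᵥ y := by
      rw [← vecMul_transpose, ← dotProduct_mulVec, mulVec_mulVec, hPt, one_mulVec]

theorem dotProduct_mulVec_of_mulVec_eq_smul {L : Matrix ι ι ℝ} (hL : L.IsSymm) {φ : ι → ℝ}
    {μ : ℝ} (hφ : L *ᵥ φ = μ • φ) (x : ι → ℝ) : φ ⬝ᵥ (L *ᵥ x) = μ * (φ ⬝ᵥ x) := by
  rw [dotProduct_mulVec, ← mulVec_transpose, hL.eq, hφ, smul_dotProduct, smul_eq_mul]

theorem dotProduct_eq_zero_of_mulVec_eq_smul_of_mulVec_eq_zero {L : Matrix ι ι ℝ}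
    (hL : L.IsSymm) {φ s : ι → ℝ} {μ : ℝ} (hφ : L *ᵥ φ = μ • φ) (hμ : μ ≠ 0)
    (hs : L *ᵥ s = 0) : φ ⬝ᵥ s = 0 := by
  have h := dotProduct_mulVec_of_mulVec_eq_smul hL hφ s
  rw [hs, dotProduct_zero] at h
  exact (mul_eq_zero.mp h.symm).resolve_left hμ

theorem dotProduct_eq_zero_of_orthonormal [DecidableEq ι] {φ : ι → ι → ℝ}
    (horth : ∀ l m, φ l ⬝ᵥ φ m = if l = m then 1 else 0) {l₀ : ι} {s z : ι → ℝ} (hs : s ≠ 0)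
    (hsφ : ∀ l ≠ l₀, φ l ⬝ᵥ s = 0) (hzs : z ⬝ᵥ s = 0) : φ l₀ ⬝ᵥ z = 0 := by
  have hexpand : ∀ x, x ⬝ᵥ s = (φ l₀ ⬝ᵥ x) * (φ l₀ ⬝ᵥ s) := fun x => by
    rw [← sum_dotProduct_mul_dotProduct_of_orthonormal horth,
      Finset.sum_eq_single l₀ (fun l _ hl => by rw [hsφ l hl, mul_zero]) (by simp)]
  have hsl₀ : φ l₀ ⬝ᵥ s ≠ 0 := fun h =>
    hs (dotProduct_self_eq_zero.mp (by rw [hexpand, h, mul_zero]))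
  exact (mul_eq_zero.mp ((hexpand z).symm.trans hzs)).resolve_right hsl₀

theorem sq_mul_dotProduct_self_le_of_orthonormal_eigenvectors [DecidableEq ι] {L : Matrix ι ι ℝ}
    (hL : L.IsSymm) {φ : ι → ι → ℝ} {lam : ι → ℝ} (heig : ∀ l, L *ᵥ φ l = lam l • φ l)
    (horth : ∀ l m, φ l ⬝ᵥ φ m = if l = m then 1 else 0) {l₀ : ι} {μ : ℝ} (hμ : 0 ≤ μ)
    (hgap : ∀ l ≠ l₀, μ ≤ lam l) {z : ι → ℝ} (hz : φ l₀ ⬝ᵥ z = 0) :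
    μ ^ 2 * (z ⬝ᵥ z) ≤ (L *ᵥ z) ⬝ᵥ (L *ᵥ z) := by
  rw [← sum_dotProduct_mul_dotProduct_of_orthonormal horth z z,
    ← sum_dotProduct_mul_dotProduct_of_orthonormal horth (L *ᵥ z), Finset.mul_sum]
  refine Finset.sum_le_sum fun l _ => ?_
  rw [dotProduct_mulVec_of_mulVec_eq_smul hL (heig l)]
  rcases eq_or_ne l l₀ with rfl | hl
  · simp [hz]
  · have := pow_le_pow_left₀ hμ (hgap l hl) 2
    nlinarith [mul_self_nonneg (φ l ⬝ᵥ z)]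

/-- The rank-one defect `c` cancels in the difference of two rows. -/
theorem sub_vecMul_of_mul_eq_one_sub [DecidableEq ι] {𝔾 M : Matrix ι ι ℝ} {c : ι → ℝ}
    (h : ∀ x y, (𝔾 * M) x y = (if x = y then 1 else 0) - c y) (u v : ι) :
    (𝔾 u - 𝔾 v) ᵥ* M = Pi.single u 1 - Pi.single v 1 := by
  ext y
  have hrow : ∀ x, (𝔾 x ᵥ* M) y = (𝔾 * M) x y := fun _ => rfl
  rw [sub_vecMul, Pi.sub_apply, hrow, hrow, h, h, Pi.sub_apply, Pi.single_apply, Pi.single_apply]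
  simp only [eq_comm]
  ring

theorem single_sub_single_dotProduct_self_le [DecidableEq ι] (u v : ι) {a b : ℝ} (ha : 0 ≤ a)
    (hb : 0 ≤ b) :
    (Pi.single u a - Pi.single v b) ⬝ᵥ (Pi.single u a - Pi.single v b) ≤ a ^ 2 + b ^ 2 := by
  rcases eq_or_ne u v with rfl | huv
  · rw [← Pi.single_sub, single_dotProduct, Pi.single_eq_same]
    nlinarith [mul_nonneg ha hb]
  · simp [huv, huv.symm, sq]

end Matrix

namespace SimpleGraph

variable {V : Type*} [Fintype V] [DecidableEq V] (G : SimpleGraph V) [DecidableRel G.Adj]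

noncomputable def invSqrtDegMatrix : Matrix V V ℝ := diagonal fun i => (Real.sqrt (G.degree i))⁻¹

noncomputable def normLapMatrix : Matrix V V ℝ :=
  1 - G.invSqrtDegMatrix * G.adjMatrix ℝ * G.invSqrtDegMatrix

noncomputable def randomWalkLapMatrix : Matrix V V ℝ :=
  1 - diagonal (fun i => (G.degree i : ℝ)⁻¹) * G.adjMatrix ℝ

theorem isSymm_normLapMatrix : G.normLapMatrix.IsSymm := by
  simp only [IsSymm, normLapMatrix, invSqrtDegMatrix, transpose_sub, transpose_one,
    transpose_mul, diagonal_transpose, transpose_adjMatrix, Matrix.mul_assoc]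

/-- Isolated vertices need no care: every neighbour of a vertex has positive degree, and an
isolated vertex only meets the junk value `(√0)⁻¹ = 0`. -/
theorem normLapMatrix_mulVec_sqrt_degree :
    G.normLapMatrix *ᵥ (fun i => Real.sqrt (G.degree i)) = 0 := by
  ext i
  have hnbr : ∑ j ∈ G.neighborFinset i, (Real.sqrt (G.degree j))⁻¹ * Real.sqrt (G.degree j)
      = G.degree i := by
    rw [Finset.sum_congr rfl fun j hj => inv_mul_cancel₀ (Real.sqrt_pos.mpr (Nat.cast_pos.mpr
      ((G.mem_neighborFinset i j).mp hj).degree_pos_right)).ne', Finset.sum_const,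
      card_neighborFinset_eq_degree, nsmul_one]
  simp only [normLapMatrix, invSqrtDegMatrix, sub_mulVec, one_mulVec, ← mulVec_mulVec,
    Pi.sub_apply, mulVec_diagonal, adjMatrix_mulVec_apply, hnbr, Pi.zero_apply]
  rw [inv_mul_eq_div, Real.div_sqrt, sub_self]

theorem invSqrtDegMatrix_mul_normLapMatrix :
    G.invSqrtDegMatrix * G.normLapMatrix = G.randomWalkLapMatrix * G.invSqrtDegMatrix := by
  have hsq : G.invSqrtDegMatrix * G.invSqrtDegMatrix = diagonal fun i => (G.degree i : ℝ)⁻¹ := by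
    rw [invSqrtDegMatrix, diagonal_mul_diagonal]
    congr 1; ext i
    rw [← mul_inv, Real.mul_self_sqrt (Nat.cast_nonneg _)]
  rw [normLapMatrix, randomWalkLapMatrix, Matrix.mul_sub, Matrix.sub_mul, Matrix.mul_one,
    Matrix.one_mul, ← Matrix.mul_assoc, ← Matrix.mul_assoc, hsq]

theorem invSqrtDegMatrix_mulVec_sqrt_degree (hdeg : ∀ i, 0 < G.degree i) :
    G.invSqrtDegMatrix *ᵥ (fun i => Real.sqrt (G.degree i)) = 1 := by
  ext i
  rw [invSqrtDegMatrix, mulVec_diagonal, Pi.one_apply, inv_mul_cancel₀]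
  exact (Real.sqrt_pos.mpr (by exact_mod_cast hdeg i)).ne'

theorem normLapMatrix_mulVec_sub_vecMul_invSqrtDegMatrix {𝔾 : Matrix V V ℝ} {c : V → ℝ}
    (h𝔾 : ∀ x y, (𝔾 * G.randomWalkLapMatrix) x y = (if x = y then 1 else 0) - c y) (u v : V) :
    G.normLapMatrix *ᵥ ((𝔾 u - 𝔾 v) ᵥ* G.invSqrtDegMatrix)
      = (Pi.single u 1 - Pi.single v 1) ᵥ* G.invSqrtDegMatrix := by
  rw [← vecMul_transpose, G.isSymm_normLapMatrix.eq, vecMul_vecMul,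
    invSqrtDegMatrix_mul_normLapMatrix, ← vecMul_vecMul, sub_vecMul_of_mul_eq_one_sub h𝔾]

theorem single_sub_single_vecMul_invSqrtDegMatrix_dotProduct_self_le {δ : ℝ} (hδ : 0 < δ)
    (hδle : ∀ i, δ ≤ G.degree i) (u v : V) :
    ((Pi.single u 1 - Pi.single v 1) ᵥ* G.invSqrtDegMatrix)
      ⬝ᵥ ((Pi.single u 1 - Pi.single v 1) ᵥ* G.invSqrtDegMatrix) ≤ 2 / δ := by
  have hinv : ∀ i, (Real.sqrt (G.degree i))⁻¹ ^ 2 ≤ δ⁻¹ := fun i => by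
    rw [inv_pow, Real.sq_sqrt (Nat.cast_nonneg _)]
    exact inv_anti₀ hδ (hδle i)
  rw [sub_vecMul, invSqrtDegMatrix, single_vecMul_diagonal, single_vecMul_diagonal, one_mul,
    one_mul]
  have := single_sub_single_dotProduct_self_le u v
    (inv_nonneg.mpr (Real.sqrt_nonneg (G.degree u)))
    (inv_nonneg.mpr (Real.sqrt_nonneg (G.degree v)))
  linarith [hinv u, hinv v, div_eq_mul_inv 2 δ]

theorem sq_mul_dotProduct_self_le_normLapMatrix_mulVec {w : V} (hw : 0 < G.degree w)
    {φ : V → V → ℝ} {lam : V → ℝ} (heig : ∀ l, G.normLapMatrix *ᵥ φ l = lam l • φ l)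
    (horth : ∀ l m, φ l ⬝ᵥ φ m = if l = m then 1 else 0) {l₀ : V} {μ : ℝ} (hμ : 0 < μ)
    (hgap : ∀ l ≠ l₀, μ ≤ lam l) {z : V → ℝ}
    (hz : z ⬝ᵥ (fun i => Real.sqrt (G.degree i)) = 0) :
    μ ^ 2 * (z ⬝ᵥ z) ≤ (G.normLapMatrix *ᵥ z) ⬝ᵥ (G.normLapMatrix *ᵥ z) := by
  refine sq_mul_dotProduct_self_le_of_orthonormal_eigenvectors G.isSymm_normLapMatrix heig horth
    hμ.le hgap (dotProduct_eq_zero_of_orthonormal horth (fun h => ?_) (fun l hl => ?_) hz)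
  · exact (Real.sqrt_pos.mpr (Nat.cast_pos.mpr hw)).ne' (congrFun h w)
  · exact dotProduct_eq_zero_of_mulVec_eq_smul_of_mulVec_eq_zero G.isSymm_normLapMatrix (heig l)
      (hμ.trans_le (hgap l hl)).ne' G.normLapMatrix_mulVec_sqrt_degree

theorem vecMul_invSqrtDegMatrix_dotProduct_sqrt_degree (hdeg : ∀ i, 0 < G.degree i)
    (w : V → ℝ) : (w ᵥ* G.invSqrtDegMatrix) ⬝ᵥ (fun i => Real.sqrt (G.degree i)) = ∑ i, w i := by
  rw [← dotProduct_mulVec, G.invSqrtDegMatrix_mulVec_sqrt_degree hdeg, dotProduct_one]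

theorem dotProduct_self_le_mul_vecMul_invSqrtDegMatrix (hdeg : ∀ i, 0 < G.degree i) {Δ : ℝ}
    (hΔ : ∀ i, (G.degree i : ℝ) ≤ Δ) (w : V → ℝ) :
    w ⬝ᵥ w ≤ Δ * ((w ᵥ* G.invSqrtDegMatrix) ⬝ᵥ (w ᵥ* G.invSqrtDegMatrix)) := by
  rw [dotProduct, dotProduct, Finset.mul_sum]
  refine Finset.sum_le_sum fun i _ => ?_
  have hd : (0 : ℝ) < G.degree i := by exact_mod_cast hdeg i
  have hw : (w ᵥ* G.invSqrtDegMatrix) i = w i / Real.sqrt (G.degree i) := by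
    rw [invSqrtDegMatrix, vecMul_diagonal, div_eq_mul_inv]
  rw [hw, div_mul_div_comm, Real.mul_self_sqrt hd.le, mul_div_assoc', le_div_iff₀ hd]
  nlinarith [hΔ i, mul_self_nonneg (w i)]

end SimpleGraph

theorem dsd_two_le_spectral_bound_general
    (n : ℕ) [NeZero n] (hn : 2 ≤ n)
    (G : SimpleGraph (Fin n)) [DecidableRel G.Adj]
    (hconn : G.Connected)
    -- eigenvalues and orthonormal eigenbasis of `𝓛 = I − D^{−1/2} A D^{−1/2}`
    (lam : Fin n → ℝ) (φ : Fin n → Fin n → ℝ)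
    (heig : ∀ l, Matrix.mulVec
        (1 - (Matrix.diagonal fun i => (Real.sqrt (G.degree i))⁻¹) * G.adjMatrix ℝ
           * (Matrix.diagonal fun i => (Real.sqrt (G.degree i))⁻¹)) (φ l)
      = lam l • φ l)
    (horth : ∀ l m, (∑ i, φ l i * φ m i) = if l = m then (1 : ℝ) else 0)
    (hmono : Monotone lam) (hlam1 : 0 < lam 1)
    -- the Green's function `𝔾` of `G`
    (𝔾 : Matrix (Fin n) (Fin n) ℝ)
    (hG1 : ∀ x y : Fin n,
      (𝔾 * (1 - (Matrix.diagonal fun i => ((G.degree i : ℝ))⁻¹) * G.adjMatrix ℝ)) x y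
        = (if x = y then (1 : ℝ) else 0) - (G.degree y : ℝ) / ∑ i, (G.degree i : ℝ))
    (hG2 : ∀ x : Fin n, ∑ y, 𝔾 x y = 0)
    (u v : Fin n) :
    Real.sqrt (∑ j, (𝔾 u j - 𝔾 v j) ^ 2)
      ≤ (Real.sqrt 2 / lam 1) * Real.sqrt
          ((Finset.univ.sup' Finset.univ_nonempty (fun i => G.degree i) : ℝ)
            / (Finset.univ.inf' Finset.univ_nonempty (fun i => G.degree i) : ℝ)) := by
  have : Nontrivial (Fin n) := Fin.nontrivial_iff_two_le.mpr hn
  have hdeg : ∀ i, 0 < G.degree i := fun i => hconn.preconnected.degree_pos_of_nontrivial i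
  set Δ := Finset.univ.sup' Finset.univ_nonempty fun i => (G.degree i : ℝ)
  set δ := Finset.univ.inf' Finset.univ_nonempty fun i => (G.degree i : ℝ)
  have hΔ : ∀ i, (G.degree i : ℝ) ≤ Δ := fun i =>
    Finset.le_sup' (fun i => (G.degree i : ℝ)) (Finset.mem_univ i)
  have hδ : ∀ i, δ ≤ G.degree i := fun i =>
    Finset.inf'_le (fun i => (G.degree i : ℝ)) (Finset.mem_univ i)
  have hδpos : 0 < δ := (Finset.lt_inf'_iff _).mpr fun i _ => Nat.cast_pos.mpr (hdeg i)
  set z := (𝔾 u - 𝔾 v) ᵥ* G.invSqrtDegMatrix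
  have hz : lam 1 ^ 2 * (z ⬝ᵥ z) ≤ 2 / δ := by
    refine (G.sq_mul_dotProduct_self_le_normLapMatrix_mulVec (hdeg u) heig horth (l₀ := 0) hlam1
      (fun l hl => hmono (Fin.one_le_of_ne_zero hl)) ?_).trans ?_
    · simp [z, G.vecMul_invSqrtDegMatrix_dotProduct_sqrt_degree hdeg, Finset.sum_sub_distrib, hG2]
    · rw [G.normLapMatrix_mulVec_sub_vecMul_invSqrtDegMatrix hG1]
      exact G.single_sub_single_vecMul_invSqrtDegMatrix_dotProduct_self_le hδpos hδ u v
  have hsum : ∑ j, (𝔾 u j - 𝔾 v j) ^ 2 ≤ 2 * (Δ / δ) / lam 1 ^ 2 :=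
    calc ∑ j, (𝔾 u j - 𝔾 v j) ^ 2 = (𝔾 u - 𝔾 v) ⬝ᵥ (𝔾 u - 𝔾 v) := by simp [dotProduct, sq]
      _ ≤ Δ * (z ⬝ᵥ z) := G.dotProduct_self_le_mul_vecMul_invSqrtDegMatrix hdeg hΔ _
      _ ≤ Δ * (2 / δ / lam 1 ^ 2) := by
        gcongr
        · exact (Nat.cast_nonneg _).trans (hΔ u)
        · rwa [le_div_iff₀ (by positivity), mul_comm]
      _ = 2 * (Δ / δ) / lam 1 ^ 2 := by ring
  refine (Real.sqrt_le_sqrt hsum).trans_eq ?_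
  rw [Real.sqrt_div' _ (sq_nonneg _), Real.sqrt_mul zero_le_two, Real.sqrt_sq hlam1.le]
  ring

/-- For a finite connected simple graph `G` with normalized Laplacian
eigenvalues `0 = λ_0 < λ_1 ≤ … ≤ λ_{n−1}`, maximum degree `Δ` and minimum degree `δ`, any two
vertices `u, v` satisfy `DSD_2(u,v) ≤ (√2/λ_1) √(Δ/δ)`. -/
theorem dsd_two_le_spectral_bound
    (n : ℕ) [NeZero n] (hn : 2 ≤ n)
    (G : SimpleGraph (Fin n)) [DecidableRel G.Adj]
    (hconn : G.Connected)
    -- eigenvalues and orthonormal eigenbasis of `𝓛 = I − D^{−1/2} A D^{−1/2}`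
    (lam : Fin n → ℝ) (φ : Fin n → Fin n → ℝ)
    (heig : ∀ l, Matrix.mulVec
        (1 - (Matrix.diagonal fun i => (Real.sqrt (G.degree i))⁻¹) * G.adjMatrix ℝ
           * (Matrix.diagonal fun i => (Real.sqrt (G.degree i))⁻¹)) (φ l)
      = lam l • φ l)
    (horth : ∀ l m, (∑ i, φ l i * φ m i) = if l = m then (1 : ℝ) else 0)
    (hmono : Monotone lam) (hlam0 : lam 0 = 0) (hlam1 : 0 < lam 1)
    -- the Green's function `𝔾` of `G`
    (𝔾 : Matrix (Fin n) (Fin n) ℝ)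
    (hG1 : ∀ x y : Fin n,
      (𝔾 * (1 - (Matrix.diagonal fun i => ((G.degree i : ℝ))⁻¹) * G.adjMatrix ℝ)) x y
        = (if x = y then (1 : ℝ) else 0) - (G.degree y : ℝ) / ∑ i, (G.degree i : ℝ))
    (hG2 : ∀ x : Fin n, ∑ y, 𝔾 x y = 0)
    (u v : Fin n) :
    Real.sqrt (∑ j, (𝔾 u j - 𝔾 v j) ^ 2)
      ≤ (Real.sqrt 2 / lam 1) * Real.sqrt
          ((Finset.univ.sup' Finset.univ_nonempty (fun i => G.degree i) : ℝ)
            / (Finset.univ.inf' Finset.univ_nonempty (fun i => G.degree i) : ℝ)) :=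
  dsd_two_le_spectral_bound_general n hn G hconn lam φ heig horth hmono hlam1 𝔾 hG1 hG2 u v
end

section
/- Let G be a finite connected simple undirected graph on n vertices with diameter m, maximum degree Δ and minimum degree δ. Then for any two vertices u and v, DSD_2(u,v) ≤ √(2Δ/δ) · m · vol(G), and consequently DSD_2(u,v) < √2 · n^{3.5}. -/
private lemma list_cs (l : List ℝ) :
    l.sum ^ 2 ≤ (l.length : ℝ) * (l.map (fun x => x ^ 2)).sum := by
  induction l with
  | nil => simp
  | cons a t ih =>
    by_cases ht : t = []
    · subst ht; simp
    · simp only [List.sum_cons, List.length_cons, List.map_cons, Nat.cast_add, Nat.cast_one]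
      have hL1 : (1:ℝ) ≤ t.length := by
        have : 1 ≤ t.length := Nat.one_le_iff_ne_zero.mpr (by simpa using ht)
        exact_mod_cast this
      have hL : (0:ℝ) ≤ t.length := by positivity
      have hQ : (0:ℝ) ≤ (t.map (fun x => x ^ 2)).sum := List.sum_nonneg (by
        intro x hx; obtain ⟨y, _, rfl⟩ := List.mem_map.mp hx; positivity)
      nlinarith [sq_nonneg ((t.length : ℝ) * a - t.sum),
        mul_nonneg hL (sub_nonneg.mpr ih), sq_nonneg t.sum]

private lemma walk_telescope {V : Type*} {G : SimpleGraph V} (g : V → ℝ)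
    {x y : V} (p : G.Walk x y) :
    (p.darts.map (fun d => g d.fst - g d.snd)).sum = g x - g y := by
  induction p with
  | nil => simp
  | cons h q ih =>
    simp only [SimpleGraph.Walk.darts_cons, List.map_cons, List.sum_cons, ih]
    ring

set_option maxHeartbeats 3200000

/-- For a finite connected simple graph `G` on `n` vertices with diameter `m`,
maximum degree `Δ` and minimum degree `δ`, any two vertices `u, v` satisfy
`DSD_2(u,v) ≤ √(2Δ/δ) · m · vol(G)`, and consequently `DSD_2(u,v) < √2 · n^{3.5}`. -/
theorem dsd_two_coarse_bound
    (n : ℕ) [NeZero n]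
    (G : SimpleGraph (Fin n)) [DecidableRel G.Adj]
    (hconn : G.Connected)
    (m : ℕ) (hm : m = G.diam)
    -- the Green's function `𝔾` of `G`
    (𝔾 : Matrix (Fin n) (Fin n) ℝ)
    (hG1 : ∀ x y : Fin n,
      (𝔾 * (1 - (Matrix.diagonal fun i => ((G.degree i : ℝ))⁻¹) * G.adjMatrix ℝ)) x y
        = (if x = y then (1 : ℝ) else 0) - (G.degree y : ℝ) / ∑ i, (G.degree i : ℝ))
    (hG2 : ∀ x : Fin n, ∑ y, 𝔾 x y = 0)
    (u v : Fin n) :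
    Real.sqrt (∑ j, (𝔾 u j - 𝔾 v j) ^ 2)
        ≤ Real.sqrt
            (2 * (Finset.univ.sup' Finset.univ_nonempty (fun i => G.degree i) : ℝ)
              / (Finset.univ.inf' Finset.univ_nonempty (fun i => G.degree i) : ℝ))
          * m * ∑ i, (G.degree i : ℝ)
      ∧ Real.sqrt (∑ j, (𝔾 u j - 𝔾 v j) ^ 2) < Real.sqrt 2 * (n : ℝ) ^ (3.5 : ℝ) := by
  classical
  have hn0 : 0 < n := Nat.pos_of_ne_zero (NeZero.ne n)
  have hnR : (0:ℝ) < n := by exact_mod_cast hn0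
  haveI : Nonempty (Fin n) := Fin.pos_iff_nonempty.mp hn0
  have hRHS2pos : (0:ℝ) < Real.sqrt 2 * (n : ℝ) ^ (3.5 : ℝ) :=
    mul_pos (Real.sqrt_pos.mpr two_pos) (Real.rpow_pos_of_pos hnR _)
  by_cases huv : u = v
  · subst huv
    have h0 : ∑ j, (𝔾 u j - 𝔾 u j) ^ 2 = 0 := by simp
    rw [h0, Real.sqrt_zero]
    constructor
    · have h1 : (0:ℝ) ≤ ∑ i, (G.degree i : ℝ) := by positivity
      have h2 : (0:ℝ) ≤ Real.sqrt
          (2 * (Finset.univ.sup' Finset.univ_nonempty (fun i => G.degree i) : ℝ)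
            / (Finset.univ.inf' Finset.univ_nonempty (fun i => G.degree i) : ℝ)) :=
        Real.sqrt_nonneg _
      have h3 : (0:ℝ) ≤ (m:ℝ) := Nat.cast_nonneg m
      exact mul_nonneg (mul_nonneg h2 h3) h1
    · exact hRHS2pos
  · set vol : ℝ := ∑ i, (G.degree i : ℝ) with hvol
    clear_value vol
    -- positive degrees
    have hdegpos : ∀ i, 0 < G.degree i := by
      intro i
      rw [SimpleGraph.degree_pos_iff_exists_adj]
      obtain ⟨j, hij⟩ : ∃ j, j ≠ i := by
        by_cases h : i = u
        · exact ⟨v, by rw [h]; exact fun hh => huv hh.symm⟩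
        · exact ⟨u, fun hh => h hh.symm⟩
      obtain ⟨p⟩ := hconn.preconnected i j
      cases p with
      | nil => exact absurd rfl hij
      | cons hadj q => exact ⟨_, hadj⟩
    set d : Fin n → ℝ := fun i => (G.degree i : ℝ) with hd
    have hdpos : ∀ i, (0:ℝ) < d i := fun i => by
      have := hdegpos i
      show (0:ℝ) < (G.degree i : ℝ)
      exact_mod_cast this
    set w : Fin n → ℝ := fun j => 𝔾 u j - 𝔾 v j with hwdef
    set g : Fin n → ℝ := fun j => w j / d j with hgdef
    have hwg : ∀ j, w j = d j * g j := fun j => by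
      have h0 : d j ≠ 0 := ne_of_gt (hdpos j)
      show w j = d j * (w j / d j)
      field_simp
    -- the key linear equation
    have hK : ∀ y, d y * g y - ∑ j, g j * (if G.Adj j y then (1:ℝ) else 0)
        = (if u = y then (1:ℝ) else 0) - (if v = y then (1:ℝ) else 0) := by
      intro y
      have hu := hG1 u y
      have hv := hG1 v y
      rw [Matrix.mul_apply] at hu hv
      simp only [Matrix.sub_apply, Matrix.one_apply, Matrix.diagonal_mul,
        SimpleGraph.adjMatrix_apply] at hu hv
      have h1 : ∑ j, w j * ((if j = y then (1:ℝ) else 0)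
            - (G.degree j : ℝ)⁻¹ * (if G.Adj j y then 1 else 0))
          = (if u = y then (1:ℝ) else 0) - (if v = y then 1 else 0) := by
        have he : ∀ j : Fin n, w j * ((if j = y then (1:ℝ) else 0)
              - (G.degree j : ℝ)⁻¹ * (if G.Adj j y then 1 else 0))
            = 𝔾 u j * ((if j = y then (1:ℝ) else 0)
              - (G.degree j : ℝ)⁻¹ * (if G.Adj j y then 1 else 0))
            - 𝔾 v j * ((if j = y then (1:ℝ) else 0)
              - (G.degree j : ℝ)⁻¹ * (if G.Adj j y then 1 else 0)) := by
          intro j; show (𝔾 u j - 𝔾 v j) * _ = _; ring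
        rw [Finset.sum_congr rfl (fun j _ => he j), Finset.sum_sub_distrib, hu, hv]
        ring
      have h2 : ∀ j : Fin n, w j * ((if j = y then (1:ℝ) else 0)
            - (G.degree j : ℝ)⁻¹ * (if G.Adj j y then 1 else 0))
          = (if j = y then w j else 0) - g j * (if G.Adj j y then (1:ℝ) else 0) := by
        intro j
        have hg : w j * (G.degree j : ℝ)⁻¹ = g j := by
          show w j * (G.degree j : ℝ)⁻¹ = w j / d j
          rw [hd, div_eq_mul_inv]
        rw [mul_sub, ← mul_assoc, hg]
        by_cases h : j = y <;> simp [h]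
      rw [Finset.sum_congr rfl (fun j _ => h2 j), Finset.sum_sub_distrib,
        Finset.sum_ite_eq' Finset.univ y w] at h1
      rw [hwg y] at h1
      simpa using h1
    clear_value d w g
    -- degree as row sum
    have hdegrow : ∀ y, ∑ j, (if G.Adj y j then (1:ℝ) else 0) = d y := by
      intro y
      rw [Finset.sum_boole]
      simp only [hd]
      norm_cast
      rw [← SimpleGraph.neighborFinset_eq_filter]
      exact G.card_neighborFinset_eq_degree y
    have hsymA : ∀ y j, (if G.Adj y j then (1:ℝ) else 0) = (if G.Adj j y then (1:ℝ) else 0) := by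
      intro y j; simp only [SimpleGraph.adj_comm]
    -- weighted sum of hK
    have hE1 : ∑ y, d y * g y ^ 2
          - ∑ y, ∑ j, g y * (g j * (if G.Adj j y then (1:ℝ) else 0))
        = g u - g v := by
      have h1 : ∀ y : Fin n, g y * (d y * g y - ∑ j, g j * (if G.Adj j y then (1:ℝ) else 0))
          = g y * ((if u = y then (1:ℝ) else 0) - (if v = y then (1:ℝ) else 0)) :=
        fun y => by rw [hK y]
      have h2 : ∑ y, g y * (d y * g y - ∑ j, g j * (if G.Adj j y then (1:ℝ) else 0))
          = ∑ y, d y * g y ^ 2 - ∑ y, ∑ j, g y * (g j * (if G.Adj j y then (1:ℝ) else 0)) := by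
        rw [← Finset.sum_sub_distrib]
        refine Finset.sum_congr rfl fun y _ => ?_
        rw [mul_sub, Finset.mul_sum]
        congr 1
        ring
      have h3 : ∑ y, g y * ((if u = y then (1:ℝ) else 0) - (if v = y then (1:ℝ) else 0))
          = g u - g v := by
        simp only [mul_sub, mul_ite, mul_one, mul_zero, Finset.sum_sub_distrib,
          Finset.sum_ite_eq, Finset.mem_univ, if_true]
      rw [← h2, Finset.sum_congr rfl (fun y _ => h1 y), h3]
    -- quadratic form identity
    have hE : ∑ y, ∑ j, (if G.Adj y j then (1:ℝ) else 0) * (g y - g j) ^ 2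
        = 2 * (g u - g v) := by
      have hexp : ∀ y j : Fin n, (if G.Adj y j then (1:ℝ) else 0) * (g y - g j) ^ 2
          = (if G.Adj y j then (1:ℝ) else 0) * g y ^ 2
            - 2 * (g y * (g j * (if G.Adj j y then (1:ℝ) else 0)))
            + (if G.Adj y j then (1:ℝ) else 0) * g j ^ 2 := by
        intro y j; rw [← hsymA y j]; ring
      have hT1 : ∑ y, ∑ j, (if G.Adj y j then (1:ℝ) else 0) * g y ^ 2
          = ∑ y, d y * g y ^ 2 := by
        refine Finset.sum_congr rfl fun y _ => ?_
        rw [← Finset.sum_mul, hdegrow]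
      have hT3 : ∑ y, ∑ j, (if G.Adj y j then (1:ℝ) else 0) * g j ^ 2
          = ∑ y, d y * g y ^ 2 := by
        rw [Finset.sum_comm]
        refine Finset.sum_congr rfl fun j _ => ?_
        rw [← Finset.sum_mul]
        congr 1
        rw [Finset.sum_congr rfl (fun y _ => hsymA y j), hdegrow]
      calc ∑ y, ∑ j, (if G.Adj y j then (1:ℝ) else 0) * (g y - g j) ^ 2
          = ∑ y, ∑ j, ((if G.Adj y j then (1:ℝ) else 0) * g y ^ 2
            - 2 * (g y * (g j * (if G.Adj j y then (1:ℝ) else 0)))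
            + (if G.Adj y j then (1:ℝ) else 0) * g j ^ 2) := by
            exact Finset.sum_congr rfl fun y _ => Finset.sum_congr rfl fun j _ => hexp y j
        _ = (∑ y, ∑ j, (if G.Adj y j then (1:ℝ) else 0) * g y ^ 2)
            - 2 * (∑ y, ∑ j, g y * (g j * (if G.Adj j y then (1:ℝ) else 0)))
            + (∑ y, ∑ j, (if G.Adj y j then (1:ℝ) else 0) * g j ^ 2) := by
            simp only [Finset.sum_add_distrib, Finset.sum_sub_distrib, Finset.mul_sum]
        _ = 2 * (g u - g v) := by rw [hT1, hT3]; linarith [hE1]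
    have hEnn : 0 ≤ g u - g v := by
      have h1 : 0 ≤ ∑ y, ∑ j, (if G.Adj y j then (1:ℝ) else 0) * (g y - g j) ^ 2 :=
        Finset.sum_nonneg fun y _ => Finset.sum_nonneg fun j _ =>
          mul_nonneg (by split <;> norm_num) (sq_nonneg _)
      linarith [hE]
    -- diameter facts
    have hediam : G.ediam ≠ ⊤ := by
      obtain ⟨a, b, hab⟩ := G.exists_edist_eq_ediam_of_finite
      rw [← hab, SimpleGraph.edist_ne_top_iff_reachable]
      exact hconn.preconnected a b
    -- the path bound
    have hpath : ∀ x y : Fin n, (g x - g y) ^ 2 ≤ (m:ℝ) * (g u - g v) := by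
      intro x y
      obtain ⟨p0, hp0⟩ := (hconn.preconnected x y).exists_walk_length_eq_dist
      set p := p0.bypass with hpdef
      have hp : p.IsPath := SimpleGraph.Walk.bypass_isPath p0
      have hlen : p.length ≤ m := by
        have h1 : p.length ≤ p0.length := SimpleGraph.Walk.length_bypass_le p0
        rw [hp0] at h1
        exact le_trans h1 (hm ▸ G.dist_le_diam hediam)
      -- darts of the path are nodup
      have he : (p.darts.map SimpleGraph.Dart.edge).Nodup := hp.edges_nodup
      have hdnodup : p.darts.Nodup := List.Nodup.of_map _ he
      have hinj := List.inj_on_of_nodup_map he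
      set L := p.darts ++ p.darts.map SimpleGraph.Dart.symm with hL
      have hLnodup : L.Nodup := by
        refine List.Nodup.append hdnodup
          (hdnodup.map (SimpleGraph.Dart.symm_involutive.injective)) ?_
        intro a ha hb
        obtain ⟨e, he', hes⟩ := List.mem_map.mp hb
        have hedge : e.edge = a.edge := by rw [← hes, SimpleGraph.Dart.edge_symm]
        have : e = a := hinj he' ha hedge
        rw [this] at hes
        exact SimpleGraph.Dart.symm_ne a hes
      set LP := L.map (SimpleGraph.Dart.toProd) with hLPdef
      have hLPnodup : LP.Nodup := hLnodup.map SimpleGraph.Dart.toProd_injective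
      -- sum over L equals twice the path sum
      have hsum2 : (L.map (fun dd => (g dd.fst - g dd.snd) ^ 2)).sum
          = 2 * (p.darts.map (fun dd => (g dd.fst - g dd.snd) ^ 2)).sum := by
        rw [hL, List.map_append, List.sum_append, List.map_map]
        have hcomp : ((fun dd : G.Dart => (g dd.fst - g dd.snd) ^ 2) ∘ SimpleGraph.Dart.symm)
            = fun dd : G.Dart => (g dd.fst - g dd.snd) ^ 2 := by
          funext dd
          show (g dd.symm.fst - g dd.symm.snd) ^ 2 = (g dd.fst - g dd.snd) ^ 2
          have h1 : dd.symm.fst = dd.snd := rfl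
          have h2 : dd.symm.snd = dd.fst := rfl
          rw [h1, h2]; ring
        rw [hcomp]; ring
      -- sum over L is at most the full quadratic form
      have hfin : ∑ q ∈ LP.toFinset, (g q.1 - g q.2) ^ 2
          = (LP.map (fun q => (g q.1 - g q.2) ^ 2)).sum :=
        List.sum_toFinset _ hLPnodup
      have hLPsum : (LP.map (fun q => (g q.1 - g q.2) ^ 2)).sum
          = (L.map (fun dd => (g dd.fst - g dd.snd) ^ 2)).sum := by
        rw [hLPdef, List.map_map]; rfl
      have hsubset : LP.toFinset ⊆ (Finset.univ ×ˢ Finset.univ).filter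
          (fun q : Fin n × Fin n => G.Adj q.1 q.2) := by
        intro q hq
        rw [List.mem_toFinset] at hq
        obtain ⟨dd, _, rfl⟩ := List.mem_map.mp hq
        simp only [Finset.mem_filter, Finset.mem_product, Finset.mem_univ, true_and]
        exact dd.adj
      have hle : ∑ q ∈ LP.toFinset, (g q.1 - g q.2) ^ 2
          ≤ ∑ q ∈ (Finset.univ ×ˢ Finset.univ).filter
              (fun q : Fin n × Fin n => G.Adj q.1 q.2), (g q.1 - g q.2) ^ 2 :=
        Finset.sum_le_sum_of_subset_of_nonneg hsubset (fun _ _ _ => sq_nonneg _)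
      have hfilter : ∑ q ∈ (Finset.univ ×ˢ Finset.univ).filter
            (fun q : Fin n × Fin n => G.Adj q.1 q.2), (g q.1 - g q.2) ^ 2
          = ∑ a, ∑ b, (if G.Adj a b then (1:ℝ) else 0) * (g a - g b) ^ 2 := by
        rw [Finset.sum_filter, Finset.sum_product]
        simp only [boole_mul]
      have hkey : (p.darts.map (fun dd => (g dd.fst - g dd.snd) ^ 2)).sum ≤ g u - g v := by
        have := hfin.symm.trans_le hle
        rw [hLPsum, hsum2, hfilter, hE] at this
        linarith
      -- telescoping and Cauchy-Schwarz
      have htel := walk_telescope g p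
      have hcs := list_cs (p.darts.map (fun dd => g dd.fst - g dd.snd))
      rw [htel, List.length_map, List.map_map] at hcs
      have hcomp2 : ((fun x : ℝ => x ^ 2) ∘ (fun dd : G.Dart => g dd.fst - g dd.snd))
          = fun dd : G.Dart => (g dd.fst - g dd.snd) ^ 2 := rfl
      rw [hcomp2] at hcs
      have hdlen : (p.darts.length : ℝ) ≤ (m : ℝ) := by
        have := p.length_darts
        exact_mod_cast this ▸ hlen
      have hnn : (0:ℝ) ≤ (p.darts.map (fun dd => (g dd.fst - g dd.snd) ^ 2)).sum :=
        List.sum_nonneg (by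
          intro x hx; obtain ⟨dd, _, rfl⟩ := List.mem_map.mp hx; positivity)
      calc (g x - g y) ^ 2
          ≤ (p.darts.length : ℝ) * (p.darts.map (fun dd => (g dd.fst - g dd.snd) ^ 2)).sum := hcs
        _ ≤ (m:ℝ) * (g u - g v) :=
            mul_le_mul hdlen hkey hnn (Nat.cast_nonneg m)
    -- E ≤ m and oscillation bound
    have hEle : g u - g v ≤ (m:ℝ) := by
      have h := hpath u v
      rcases eq_or_lt_of_le hEnn with h0 | h0
      · rw [← h0]; exact Nat.cast_nonneg m
      · nlinarith
    have hosc : ∀ x y, (g x - g y) ^ 2 ≤ (m:ℝ) ^ 2 := by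
      intro x y
      refine le_trans (hpath x y) ?_
      have := Nat.cast_nonneg (α := ℝ) m
      nlinarith
    -- sum of w vanishes
    have hwsum : ∑ j, w j = 0 := by
      rw [hwdef]
      simp only [Finset.sum_sub_distrib]
      rw [hG2 u, hG2 v, sub_zero]
    have hgd : ∀ j, w j = d j * g j := hwg
    have exneg : ∃ i, g i ≤ 0 := by
      by_contra h
      push_neg at h
      have : 0 < ∑ j, w j := Finset.sum_pos (fun j _ => by
        rw [hwg j]; exact mul_pos (hdpos j) (h j)) ⟨u, Finset.mem_univ u⟩
      linarith
    have expos : ∃ i, 0 ≤ g i := by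
      by_contra h
      push_neg at h
      have : ∑ j, w j < 0 := Finset.sum_neg (fun j _ => by
        rw [hwg j]; exact mul_neg_of_pos_of_neg (hdpos j) (h j)) ⟨u, Finset.mem_univ u⟩
      linarith
    have gbnd : ∀ x, |g x| ≤ (m:ℝ) := by
      intro x
      obtain ⟨i0, hi0⟩ := exneg
      obtain ⟨i1, hi1⟩ := expos
      have h1 := hosc x i0
      have h2 := hosc x i1
      have hm0 : (0:ℝ) ≤ m := Nat.cast_nonneg m
      rw [abs_le]
      constructor <;> nlinarith
    -- degree bounds
    set ΔR : ℝ := Finset.univ.sup' Finset.univ_nonempty d with hΔdef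
    set δR : ℝ := Finset.univ.inf' Finset.univ_nonempty d with hδdef
    clear_value ΔR δR
    have hΔd : ∀ i, d i ≤ ΔR := fun i => hΔdef ▸ Finset.le_sup' d (Finset.mem_univ i)
    have hδd : ∀ i, δR ≤ d i := fun i => hδdef ▸ Finset.inf'_le d (Finset.mem_univ i)
    have hδpos : (0:ℝ) < δR := by
      obtain ⟨i, _, hi⟩ := Finset.exists_mem_eq_inf' Finset.univ_nonempty d
      rw [hδdef, hi]
      exact hdpos i
    have hΔpos : (0:ℝ) < ΔR := lt_of_lt_of_le hδpos (le_trans (hδd u) (hΔd u))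
    -- bound on each w j
    have hwbnd : ∀ j, w j ^ 2 ≤ (ΔR * m) ^ 2 := by
      intro j
      rw [hwg j]
      have habs : |d j * g j| ≤ ΔR * m := by
        rw [abs_mul, abs_of_pos (hdpos j)]
        exact mul_le_mul (hΔd j) (gbnd j) (abs_nonneg _) (le_of_lt hΔpos)
      calc (d j * g j) ^ 2 = |d j * g j| ^ 2 := (sq_abs _).symm
        _ ≤ (ΔR * m) ^ 2 := by
          have h0 : (0:ℝ) ≤ |d j * g j| := abs_nonneg _
          nlinarith
    have hsumw : ∑ j, w j ^ 2 ≤ (n:ℝ) * (ΔR * m) ^ 2 := by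
      calc ∑ j, w j ^ 2 ≤ ∑ _j : Fin n, (ΔR * m) ^ 2 :=
            Finset.sum_le_sum fun j _ => hwbnd j
        _ = (n:ℝ) * (ΔR * m) ^ 2 := by
            rw [Finset.sum_const, Finset.card_univ, Fintype.card_fin, nsmul_eq_mul]
    -- volume facts
    have hvold : vol = ∑ i, d i := by rw [hvol]
    have hvolΔ : ΔR ≤ vol := by
      obtain ⟨i, _, hi⟩ := Finset.exists_mem_eq_sup' Finset.univ_nonempty d
      rw [hΔdef, hi, hvold]
      exact Finset.single_le_sum (fun j _ => le_of_lt (hdpos j)) (Finset.mem_univ i)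
    have hvolδ : (n:ℝ) * δR ≤ vol := by
      rw [hvold]
      calc (n:ℝ) * δR = ∑ _i : Fin n, δR := by
            rw [Finset.sum_const, Finset.card_univ, Fintype.card_fin, nsmul_eq_mul]
        _ ≤ ∑ i, d i := Finset.sum_le_sum fun i _ => hδd i
    have hvolpos : 0 < vol := lt_of_lt_of_le hΔpos hvolΔ
    -- first goal
    have goal1 : Real.sqrt (∑ j, (𝔾 u j - 𝔾 v j) ^ 2)
        ≤ Real.sqrt (2 * ΔR / δR) * m * vol := by
      have hsum_eq : ∑ j, (𝔾 u j - 𝔾 v j) ^ 2 = ∑ j, w j ^ 2 := by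
        refine Finset.sum_congr rfl fun j _ => ?_
        rw [hwdef]
      rw [hsum_eq]
      have hRnn : 0 ≤ Real.sqrt (2 * ΔR / δR) * m * vol :=
        mul_nonneg (mul_nonneg (Real.sqrt_nonneg _) (Nat.cast_nonneg m)) (le_of_lt hvolpos)
      rw [show Real.sqrt (2 * ΔR / δR) * m * vol
          = Real.sqrt ((Real.sqrt (2 * ΔR / δR) * m * vol) ^ 2) from
        (Real.sqrt_sq hRnn).symm]
      apply Real.sqrt_le_sqrt
      have hqnn : (0:ℝ) ≤ 2 * ΔR / δR := by positivity
      have hRsq : (Real.sqrt (2 * ΔR / δR) * m * vol) ^ 2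
          = (2 * ΔR / δR) * (m:ℝ) ^ 2 * vol ^ 2 := by
        rw [mul_pow, mul_pow, Real.sq_sqrt hqnn]
      rw [hRsq]
      have h1 : (n:ℝ) * δR * ΔR ≤ vol ^ 2 := by nlinarith
      have h2 : (2 * ΔR / δR) * ((n:ℝ) * δR * ΔR) = 2 * (n:ℝ) * ΔR ^ 2 := by
        field_simp
      have key : (n:ℝ) * ΔR ^ 2 ≤ (2 * ΔR / δR) * vol ^ 2 := by
        have h3 : (2 * ΔR / δR) * ((n:ℝ) * δR * ΔR) ≤ (2 * ΔR / δR) * vol ^ 2 :=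
          mul_le_mul_of_nonneg_left h1 (by positivity)
        nlinarith
      calc ∑ j, w j ^ 2 ≤ (n:ℝ) * (ΔR * m) ^ 2 := hsumw
        _ = ((n:ℝ) * ΔR ^ 2) * (m:ℝ) ^ 2 := by ring
        _ ≤ ((2 * ΔR / δR) * vol ^ 2) * (m:ℝ) ^ 2 :=
            mul_le_mul_of_nonneg_right key (by positivity)
        _ = (2 * ΔR / δR) * (m:ℝ) ^ 2 * vol ^ 2 := by ring
    -- second goal
    have hΔn : ΔR ≤ (n:ℝ) := by
      obtain ⟨i, _, hi⟩ := Finset.exists_mem_eq_sup' Finset.univ_nonempty d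
      rw [hΔdef, hi]
      simp only [hd]
      have := G.degree_lt_card_verts i
      rw [Fintype.card_fin] at this
      exact_mod_cast le_of_lt this
    have hmn : (m:ℝ) ≤ (n:ℝ) := by
      have hmlt : m < n := by
        rw [hm]
        obtain ⟨a, b, hab⟩ := G.exists_dist_eq_diam
        rw [← hab]
        obtain ⟨p0, hp0⟩ := (hconn.preconnected a b).exists_walk_length_eq_dist
        have h1 : G.dist a b ≤ p0.bypass.length := SimpleGraph.dist_le _
        have h2 : p0.bypass.length < Fintype.card (Fin n) :=
          (SimpleGraph.Walk.bypass_isPath p0).length_lt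
        rw [Fintype.card_fin] at h2
        exact lt_of_le_of_lt h1 h2
      exact_mod_cast le_of_lt hmlt
    have goal2 : Real.sqrt (∑ j, (𝔾 u j - 𝔾 v j) ^ 2) < Real.sqrt 2 * (n : ℝ) ^ (3.5 : ℝ) := by
      have hsum_eq : ∑ j, (𝔾 u j - 𝔾 v j) ^ 2 = ∑ j, w j ^ 2 := by
        refine Finset.sum_congr rfl fun j _ => ?_
        rw [hwdef]
      rw [hsum_eq]
      have hRHS2pos : (0:ℝ) < Real.sqrt 2 * (n : ℝ) ^ (3.5 : ℝ) :=
        mul_pos (Real.sqrt_pos.mpr two_pos) (Real.rpow_pos_of_pos hnR _)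
      rw [Real.sqrt_lt' hRHS2pos]
      have hsq : (Real.sqrt 2 * (n:ℝ) ^ (3.5:ℝ)) ^ 2 = 2 * (n:ℝ) ^ (7:ℕ) := by
        rw [mul_pow, Real.sq_sqrt (by norm_num : (0:ℝ) ≤ 2)]
        congr 1
        rw [← Real.rpow_natCast ((n:ℝ) ^ (3.5:ℝ)) 2, ← Real.rpow_mul (le_of_lt hnR)]
        rw [show (3.5:ℝ) * (2:ℕ) = ((7:ℕ):ℝ) by norm_num]
        rw [Real.rpow_natCast]
      rw [hsq]
      have hn1 : (1:ℝ) ≤ (n:ℝ) := by exact_mod_cast hn0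
      have h5 : (n:ℝ) * (ΔR * m) ^ 2 ≤ (n:ℝ) ^ 5 := by
        have hΔ0 : (0:ℝ) ≤ ΔR := le_of_lt hΔpos
        have hm0 : (0:ℝ) ≤ m := Nat.cast_nonneg m
        have h1 : ΔR * m ≤ (n:ℝ) * n := mul_le_mul hΔn hmn hm0 (le_of_lt hnR)
        have h2 : (ΔR * m) ^ 2 ≤ ((n:ℝ) * n) ^ 2 :=
          pow_le_pow_left₀ (mul_nonneg hΔ0 hm0) h1 2
        calc (n:ℝ) * (ΔR * m) ^ 2 ≤ (n:ℝ) * ((n:ℝ) * n) ^ 2 :=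
              mul_le_mul_of_nonneg_left h2 (le_of_lt hnR)
          _ = (n:ℝ) ^ 5 := by ring
      have h7 : (n:ℝ) ^ 5 < 2 * (n:ℝ) ^ (7:ℕ) := by
        have : (n:ℝ) ^ 5 ≤ (n:ℝ) ^ 7 := pow_le_pow_right₀ hn1 (by norm_num)
        have h70 : (0:ℝ) < (n:ℝ) ^ 7 := by positivity
        calc (n:ℝ) ^ 5 ≤ (n:ℝ) ^ 7 := this
          _ < 2 * (n:ℝ) ^ 7 := by linarith
      calc ∑ j, w j ^ 2 ≤ (n:ℝ) * (ΔR * m) ^ 2 := hsumw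
        _ ≤ (n:ℝ) ^ 5 := h5
        _ < 2 * (n:ℝ) ^ (7:ℕ) := h7
    exact ⟨goal1, goal2⟩
end

section
/- Let n ≥ 2 and let P_n be the path graph with vertices 1,…,n and edges {i,i+1} for 1 ≤ i ≤ n−1. Then the Green's function 𝔾 of P_n is given by: 𝔾(u,v) = (d_v/(2(n−1))) ((u−1)² + (n−v)² − (2n²−4n+3)/6) if u ≤ v, and 𝔾(u,v) = (d_v/(2(n−1))) ((v−1)² + (n−u)² − (2n²−4n+3)/6) if u > v, where d_1 = d_n = 1 and d_i = 2 for 1 < i < n. -/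
/-- The adjacency relation of the path graph is decidable. -/
instance pathGraphAdjDecidable (n : ℕ) : DecidableRel (SimpleGraph.pathGraph n).Adj :=
  fun _ _ => decidable_of_iff _ SimpleGraph.pathGraph_adj.symm


open Finset

/-- constant in the Green's function formula for the path -/
noncomputable def pathK (n : ℕ) : ℝ := (2 * (n : ℝ) ^ 2 - 4 * (n : ℝ) + 3) / 6

/-- the symmetric kernel appearing in the Green's function of the path -/
noncomputable def pathF (n x y : ℕ) : ℝ :=
  ((min x y : ℕ) : ℝ) ^ 2 + ((n : ℝ) - 1 - ((max x y : ℕ) : ℝ)) ^ 2 - pathK n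

lemma pathF_le {x y : ℕ} (n : ℕ) (h : x ≤ y) :
    pathF n x y = (x:ℝ)^2 + ((n:ℝ) - 1 - (y:ℝ))^2 - pathK n := by
  unfold pathF; rw [min_eq_left h, max_eq_right h]

lemma pathF_ge {x y : ℕ} (n : ℕ) (h : y ≤ x) :
    pathF n x y = (y:ℝ)^2 + ((n:ℝ) - 1 - (x:ℝ))^2 - pathK n := by
  unfold pathF; rw [min_eq_right h, max_eq_left h]

lemma sum_sq_range (m : ℕ) :
    ∑ i ∈ range m, ((i : ℝ)) ^ 2 = (m : ℝ) * ((m : ℝ) - 1) * (2 * (m : ℝ) - 1) / 6 := by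
  induction m with
  | zero => simp
  | succ k ih => rw [Finset.sum_range_succ, ih]; push_cast; ring

lemma sum_pathF (n x : ℕ) (hx : x < n) :
    ∑ v ∈ range n, pathF n x v
      = ((x:ℝ) * ((x:ℝ) - 1) * (2*(x:ℝ) - 1) / 6)
        + (x:ℝ) * (((n:ℝ) - 1 - (x:ℝ))^2 - pathK n)
        + (((n:ℝ)-(x:ℝ)) * (((n:ℝ)-(x:ℝ)) - 1) * (2*((n:ℝ)-(x:ℝ)) - 1) / 6)
        + ((n:ℝ)-(x:ℝ)) * ((x:ℝ)^2 - pathK n) := by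
  rw [Finset.range_eq_Ico, ← Finset.sum_Ico_consecutive _ (Nat.zero_le x) (le_of_lt hx)]
  have h1 : ∑ v ∈ Finset.Ico 0 x, pathF n x v
      = ((x:ℝ) * ((x:ℝ) - 1) * (2*(x:ℝ) - 1) / 6) + (x:ℝ) * (((n:ℝ) - 1 - (x:ℝ))^2 - pathK n) := by
    rw [← Finset.range_eq_Ico]
    have : ∀ v ∈ range x, pathF n x v = (v:ℝ)^2 + (((n:ℝ) - 1 - (x:ℝ))^2 - pathK n) := by
      intro v hv
      rw [Finset.mem_range] at hv
      unfold pathF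
      rw [min_eq_right (le_of_lt hv), max_eq_left (le_of_lt hv)]
      ring
    rw [Finset.sum_congr rfl this, Finset.sum_add_distrib, Finset.sum_const, card_range,
      sum_sq_range, nsmul_eq_mul]
  have h2 : ∑ v ∈ Finset.Ico x n, pathF n x v
      = (((n:ℝ)-(x:ℝ)) * (((n:ℝ)-(x:ℝ)) - 1) * (2*((n:ℝ)-(x:ℝ)) - 1) / 6)
        + ((n:ℝ)-(x:ℝ)) * ((x:ℝ)^2 - pathK n) := by
    rw [Finset.sum_Ico_eq_sum_range]
    have : ∀ i ∈ range (n - x), pathF n x (x + i)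
        = (((n - x - 1 - i : ℕ)):ℝ)^2 + ((x:ℝ)^2 - pathK n) := by
      intro i hi
      rw [Finset.mem_range] at hi
      unfold pathF
      rw [min_eq_left (Nat.le_add_right _ _), max_eq_right (Nat.le_add_right _ _)]
      have : ((n:ℝ) - 1 - ((x + i : ℕ):ℝ)) = (((n - x - 1 - i : ℕ)):ℝ) := by
        have h1 : (((n - x - 1 - i : ℕ)):ℝ) = (n:ℝ) - (x:ℝ) - 1 - (i:ℝ) := by
          have : (n - x - 1 - i : ℕ) + (x + i + 1) = n := by omega
          have := congrArg (fun k : ℕ => (k : ℝ)) this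
          push_cast at this
          linarith
        rw [h1]; push_cast; ring
      rw [this]; ring
    rw [Finset.sum_congr rfl this, Finset.sum_add_distrib, Finset.sum_const, card_range,
      nsmul_eq_mul]
    have hrefl := Finset.sum_range_reflect (fun i : ℕ => ((i:ℕ):ℝ)^2) (n - x)
    have : ∀ i ∈ range (n-x), (((n - x - 1 - i : ℕ)):ℝ)^2
        = (fun i : ℕ => ((i:ℕ):ℝ)^2) (n - x - 1 - i) := by
      intro i _; rfl
    rw [Finset.sum_congr rfl this, hrefl, sum_sq_range]
    have hc : ((n - x : ℕ) : ℝ) = (n:ℝ) - (x:ℝ) := by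
      rw [Nat.cast_sub (le_of_lt hx)]
    rw [hc]
  rw [h1, h2]
  ring

lemma keysum (n x : ℕ) (hn : 2 ≤ n) (hx : x < n) :
    ∑ v ∈ range n, (if v = 0 ∨ v = n - 1 then (1:ℝ) else 2) * pathF n x v = 0 := by
  have hne : (0 : ℕ) ≠ n - 1 := by omega
  have step : ∀ v ∈ range n, (if v = 0 ∨ v = n - 1 then (1:ℝ) else 2) * pathF n x v
      = 2 * pathF n x v - (if v = 0 then pathF n x v else 0)
        - (if v = n - 1 then pathF n x v else 0) := by
    intro v _
    by_cases h0 : v = 0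
    · subst h0; rw [if_pos (Or.inl rfl), if_pos rfl, if_neg hne]; ring
    · by_cases h1 : v = n - 1
      · subst h1; rw [if_pos (Or.inr rfl), if_neg h0, if_pos rfl]; ring
      · rw [if_neg (by tauto), if_neg h0, if_neg h1]; ring
  rw [Finset.sum_congr rfl step]
  rw [Finset.sum_sub_distrib, Finset.sum_sub_distrib, ← Finset.mul_sum,
    Finset.sum_ite_eq' (range n) 0, Finset.sum_ite_eq' (range n) (n-1),
    if_pos (Finset.mem_range.2 (by omega)), if_pos (Finset.mem_range.2 (by omega)),
    sum_pathF n x hx]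
  have hF0 : pathF n x 0 = ((n:ℝ) - 1 - (x:ℝ))^2 - pathK n := by
    unfold pathF
    rw [min_eq_right (Nat.zero_le x), max_eq_left (Nat.zero_le x)]
    push_cast; ring
  have hFn : pathF n x (n-1) = (x:ℝ)^2 - pathK n := by
    unfold pathF
    rw [min_eq_left (by omega), max_eq_right (by omega)]
    have : ((n - 1 : ℕ) : ℝ) = (n:ℝ) - 1 := by rw [Nat.cast_sub (by omega)]; norm_num
    rw [this]; ring
  rw [hF0, hFn]
  unfold pathK
  ring

lemma sum_w (n : ℕ) (hn : 2 ≤ n) :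
    ∑ k ∈ range n, (if k = 0 ∨ k = n - 1 then (1:ℝ) else 2) = 2 * (n:ℝ) - 2 := by
  have hne : (0 : ℕ) ≠ n - 1 := by omega
  have step : ∀ v ∈ range n, (if v = 0 ∨ v = n - 1 then (1:ℝ) else 2)
      = 2 - (if v = 0 then (1:ℝ) else 0) - (if v = n - 1 then (1:ℝ) else 0) := by
    intro v _
    by_cases h0 : v = 0
    · subst h0; rw [if_pos (Or.inl rfl), if_pos rfl, if_neg hne]; ring
    · by_cases h1 : v = n - 1
      · subst h1; rw [if_pos (Or.inr rfl), if_neg h0, if_pos rfl]; ring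
      · rw [if_neg (by tauto), if_neg h0, if_neg h1]; ring
  rw [Finset.sum_congr rfl step]
  rw [Finset.sum_sub_distrib, Finset.sum_sub_distrib,
    Finset.sum_ite_eq' (range n) 0, Finset.sum_ite_eq' (range n) (n-1),
    if_pos (Finset.mem_range.2 (by omega)), if_pos (Finset.mem_range.2 (by omega)),
    Finset.sum_const, card_range, nsmul_eq_mul]
  push_cast
  ring

lemma key (n x y : ℕ) (hn : 2 ≤ n) (hx : x < n) (hy : y < n) :
    (if y = 0 ∨ y = n-1 then (1:ℝ) else 2) * pathF n x y
      - ((if 0 < y then pathF n x (y-1) else 0) + (if y+1 < n then pathF n x (y+1) else 0))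
    = 2*((n:ℝ)-1) * (if x = y then (1:ℝ) else 0) - (if y = 0 ∨ y = n-1 then (1:ℝ) else 2) := by
  have c2 : ((n-1:ℕ):ℝ) = (n:ℝ)-1 := by rw [Nat.cast_sub (by omega)]; norm_num
  have c3 : ((n-2:ℕ):ℝ) = (n:ℝ)-2 := by rw [Nat.cast_sub (by omega)]; norm_num
  by_cases hy0 : y = 0
  · subst hy0
    rw [if_pos (Or.inl rfl), if_neg (lt_irrefl 0), if_pos (by omega : 0+1 < n)]
    rcases Nat.eq_zero_or_pos x with hx0 | hx1
    · subst hx0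
      rw [if_pos rfl, pathF_ge n (le_refl 0), pathF_le n (by omega : 0 ≤ 1)]
      push_cast; ring
    · rw [if_neg (by omega : ¬ x = 0), pathF_ge n (Nat.zero_le x), pathF_ge n hx1]
      push_cast; ring
  · by_cases hyn : y = n-1
    · subst hyn
      have c1 : ((n-1-1:ℕ):ℝ) = (n:ℝ)-2 := by
        rw [(by omega : n-1-1 = n-2), c3]
      rw [if_pos (Or.inr rfl), if_pos (by omega : 0 < n-1), if_neg (by omega : ¬ (n-1+1 < n))]
      rcases Nat.lt_or_ge x (n-1) with hxlt | hxge
      · rw [if_neg (by omega : ¬ x = n-1), pathF_le n (le_of_lt hxlt),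
          pathF_le n (by omega : x ≤ n-1-1), c1, c2]
        ring
      · have hxe : x = n-1 := by omega
        subst hxe
        rw [if_pos rfl, pathF_le n (le_refl (n-1)), pathF_ge n (by omega : n-1-1 ≤ n-1), c1, c2]
        ring
    · have h1 : 0 < y := by omega
      have h2 : y + 1 < n := by omega
      have cy1 : ((y-1:ℕ):ℝ) = (y:ℝ)-1 := by rw [Nat.cast_sub (by omega)]; norm_num
      rw [if_neg (by tauto), if_pos h1, if_pos h2]
      rcases lt_trichotomy x y with hlt | heq | hgt
      · rw [if_neg (by omega : ¬ x = y), pathF_le n (le_of_lt hlt),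
          pathF_le n (by omega : x ≤ y-1), pathF_le n (by omega : x ≤ y+1), cy1]
        push_cast; ring
      · subst heq
        rw [if_pos rfl, pathF_le n (le_refl x), pathF_ge n (by omega : x-1 ≤ x),
          pathF_le n (by omega : x ≤ x+1), cy1]
        push_cast; ring
      · rw [if_neg (by omega : ¬ x = y), pathF_ge n (le_of_lt hgt),
          pathF_ge n (by omega : y-1 ≤ x), pathF_ge n (by omega : y+1 ≤ x), cy1]
        push_cast; ring

lemma path_nbr_sum (n : ℕ) (g : Fin n → ℝ) (y : Fin n) :
    ∑ i : Fin n, (if (SimpleGraph.pathGraph n).Adj i y then g i else 0)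
    = (if h : 0 < y.1 then g ⟨y.1 - 1, Nat.lt_of_le_of_lt (Nat.sub_le _ _) y.isLt⟩ else 0)
      + (if h : y.1 + 1 < n then g ⟨y.1 + 1, h⟩ else 0) := by
  have split : ∀ i : Fin n, (if (SimpleGraph.pathGraph n).Adj i y then g i else 0)
      = (if i.1 + 1 = y.1 then g i else 0) + (if y.1 + 1 = i.1 then g i else 0) := by
    intro i
    simp only [SimpleGraph.pathGraph_adj]
    have hnot : ¬(i.1 + 1 = y.1 ∧ y.1 + 1 = i.1) := by omega
    by_cases h1 : i.1 + 1 = y.1 <;> by_cases h2 : y.1 + 1 = i.1 <;> simp_all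
  rw [Finset.sum_congr rfl (fun i _ => split i), Finset.sum_add_distrib]
  congr 1
  · by_cases hy : 0 < y.1
    · rw [dif_pos hy]
      set a : Fin n := ⟨y.1 - 1, Nat.lt_of_le_of_lt (Nat.sub_le _ _) y.isLt⟩
      rw [Finset.sum_eq_single a]
      · rw [if_pos (by simp only [a]; omega)]
      · intro b _ hb
        rw [if_neg]
        intro hcon
        exact hb (Fin.ext (by simp only [a]; omega))
      · intro h; exact absurd (Finset.mem_univ a) h
    · rw [dif_neg hy]
      apply Finset.sum_eq_zero
      intro i _
      rw [if_neg (by omega)]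
  · by_cases hy : y.1 + 1 < n
    · rw [dif_pos hy]
      set a : Fin n := ⟨y.1 + 1, hy⟩
      rw [Finset.sum_eq_single a]
      · rw [if_pos rfl]
      · intro b _ hb
        rw [if_neg]
        intro hcon
        exact hb (Fin.ext (by simp only [a]; omega))
      · intro h; exact absurd (Finset.mem_univ a) h
    · rw [dif_neg hy]
      apply Finset.sum_eq_zero
      intro i _
      rw [if_neg (by omega)]

lemma mul_L_apply (n : ℕ) (d : Fin n → ℝ) (M : Matrix (Fin n) (Fin n) ℝ) (x y : Fin n) :
    (M * (1 - (Matrix.diagonal fun i => (d i)⁻¹) * (SimpleGraph.pathGraph n).adjMatrix ℝ)) x y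
    = M x y
      - ((if h : 0 < y.1 then
            M x ⟨y.1 - 1, Nat.lt_of_le_of_lt (Nat.sub_le _ _) y.isLt⟩
              * (d ⟨y.1 - 1, Nat.lt_of_le_of_lt (Nat.sub_le _ _) y.isLt⟩)⁻¹ else 0)
        + (if h : y.1 + 1 < n then M x ⟨y.1 + 1, h⟩ * (d ⟨y.1 + 1, h⟩)⁻¹ else 0)) := by
  rw [Matrix.mul_sub, Matrix.mul_one, Matrix.sub_apply, ← Matrix.mul_assoc]
  congr 1
  rw [Matrix.mul_apply]
  have : ∀ i : Fin n, (M * Matrix.diagonal fun i => (d i)⁻¹) x i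
        * (SimpleGraph.pathGraph n).adjMatrix ℝ i y
      = (if (SimpleGraph.pathGraph n).Adj i y then M x i * (d i)⁻¹ else 0) := by
    intro i
    rw [Matrix.mul_diagonal, SimpleGraph.adjMatrix_apply]
    by_cases h : (SimpleGraph.pathGraph n).Adj i y <;> simp [h]
  rw [Finset.sum_congr rfl (fun i _ => this i)]
  exact path_nbr_sum n (fun i => M x i * (d i)⁻¹) y

/-- For `n ≥ 2`, the Green's function `𝔾` of the path `P_n` (vertices
`1,…,n`, here `0`-indexed as `Fin n`) is given by
`𝔾(u,v) = (d_v/(2(n−1))) ((u−1)² + (n−v)² − (2n²−4n+3)/6)` for `u ≤ v` (symmetrically for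
`u > v`), where `d_1 = d_n = 1` and `d_i = 2` for `1 < i < n`. -/
theorem green_function_path
    (n : ℕ) (hn : 2 ≤ n)
    -- the degrees of the path: `d_1 = d_n = 1`, `d_i = 2` otherwise
    (d : Fin n → ℝ) (hd : ∀ i, d i = if (i : ℕ) = 0 ∨ (i : ℕ) = n - 1 then 1 else 2)
    -- the Green's function `𝔾` of `P_n` (with `vol(P_n) = 2(n−1)`)
    (𝔾 : Matrix (Fin n) (Fin n) ℝ)
    (hG1 : ∀ x y : Fin n,
      (𝔾 * (1 - (Matrix.diagonal fun i => (d i)⁻¹) * (SimpleGraph.pathGraph n).adjMatrix ℝ)) x y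
        = (if x = y then (1 : ℝ) else 0) - d y / (2 * ((n : ℝ) - 1)))
    (hG2 : ∀ x : Fin n, ∑ y, 𝔾 x y = 0) :
    ∀ u v : Fin n,
      𝔾 u v =
        if (u : ℕ) ≤ (v : ℕ) then
          d v / (2 * ((n : ℝ) - 1))
            * ((u : ℝ) ^ 2 + ((n : ℝ) - 1 - (v : ℝ)) ^ 2
                - (2 * (n : ℝ) ^ 2 - 4 * (n : ℝ) + 3) / 6)
        else
          d v / (2 * ((n : ℝ) - 1))
            * ((v : ℝ) ^ 2 + ((n : ℝ) - 1 - (u : ℝ)) ^ 2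
                - (2 * (n : ℝ) ^ 2 - 4 * (n : ℝ) + 3) / 6) := by
  have hc : (2 * ((n : ℝ) - 1)) ≠ 0 := by
    have : (2:ℝ) ≤ (n:ℝ) := by exact_mod_cast hn
    intro h; nlinarith
  have hdne : ∀ i, d i ≠ 0 := by
    intro i; rw [hd i]; split_ifs <;> norm_num
  set c : ℝ := 2 * ((n : ℝ) - 1) with hcdef
  set G' : Matrix (Fin n) (Fin n) ℝ :=
    Matrix.of (fun a b : Fin n => d b / c * pathF n a.1 b.1) with hG'def
  have hG'app : ∀ a b : Fin n, G' a b = d b / c * pathF n a.1 b.1 := fun a b => rfl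
  have hG1' : ∀ x y : Fin n,
      (G' * (1 - (Matrix.diagonal fun i => (d i)⁻¹) * (SimpleGraph.pathGraph n).adjMatrix ℝ)) x y
        = (if x = y then (1 : ℝ) else 0) - d y / c := by
    intro x y
    rw [mul_L_apply]
    have hval : ∀ b : Fin n, G' x b * (d b)⁻¹ = pathF n x.1 b.1 / c := by
      intro b
      rw [hG'app]
      field_simp [hdne b]
    have hL : (if h : 0 < y.1 then
          G' x ⟨y.1 - 1, Nat.lt_of_le_of_lt (Nat.sub_le _ _) y.isLt⟩
            * (d ⟨y.1 - 1, Nat.lt_of_le_of_lt (Nat.sub_le _ _) y.isLt⟩)⁻¹ else 0)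
        = (if 0 < y.1 then pathF n x.1 (y.1 - 1) else 0) / c := by
      by_cases h : 0 < y.1
      · rw [dif_pos h, if_pos h, hval]
      · rw [dif_neg h, if_neg h, zero_div]
    have hR : (if h : y.1 + 1 < n then G' x ⟨y.1 + 1, h⟩ * (d ⟨y.1 + 1, h⟩)⁻¹ else 0)
        = (if y.1 + 1 < n then pathF n x.1 (y.1 + 1) else 0) / c := by
      by_cases h : y.1 + 1 < n
      · rw [dif_pos h, if_pos h, hval]
      · rw [dif_neg h, if_neg h, zero_div]
    rw [hL, hR, hG'app, hd y]
    have hxy : (if x = y then (1:ℝ) else 0) = (if x.1 = y.1 then (1:ℝ) else 0) := by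
      simp [Fin.ext_iff]
    rw [hxy]
    have hkey := key n x.1 y.1 hn x.isLt y.isLt
    have hmerge : (if (y:ℕ) = 0 ∨ (y:ℕ) = n - 1 then (1:ℝ) else 2) / c * pathF n x.1 y.1
        - ((if 0 < y.1 then pathF n x.1 (y.1 - 1) else 0) / c
          + (if y.1 + 1 < n then pathF n x.1 (y.1 + 1) else 0) / c)
        = ((if (y:ℕ) = 0 ∨ (y:ℕ) = n - 1 then (1:ℝ) else 2) * pathF n x.1 y.1
          - ((if 0 < y.1 then pathF n x.1 (y.1 - 1) else 0)
            + (if y.1 + 1 < n then pathF n x.1 (y.1 + 1) else 0))) / c := by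
      ring
    rw [hmerge, hkey, ← hcdef, sub_div, mul_div_cancel_left₀ _ hc]
  have hG2' : ∀ x : Fin n, ∑ y, G' x y = 0 := by
    intro x
    have hrw : ∀ y : Fin n, G' x y
        = (fun k : ℕ => (if k = 0 ∨ k = n - 1 then (1:ℝ) else 2) / c * pathF n x.1 k) y.1 := by
      intro y; rw [hG'app, hd y]
    rw [Finset.sum_congr rfl (fun y _ => hrw y),
      Fin.sum_univ_eq_sum_range
        (fun k : ℕ => (if k = 0 ∨ k = n - 1 then (1:ℝ) else 2) / c * pathF n x.1 k) n]
    have hrw2 : ∀ k ∈ Finset.range n,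
        (if k = 0 ∨ k = n - 1 then (1:ℝ) else 2) / c * pathF n x.1 k
        = ((if k = 0 ∨ k = n - 1 then (1:ℝ) else 2) * pathF n x.1 k) / c := by
      intro k _; ring
    rw [Finset.sum_congr rfl hrw2, ← Finset.sum_div, keysum n x.1 hn x.isLt, zero_div]
  have main : ∀ a b : Fin n, 𝔾 a b = G' a b := by
    intro a
    set r : Fin n → ℝ := fun b => 𝔾 a b - G' a b with hrdef
    suffices hsuff : ∀ b, r b = 0 by
      intro b
      have := hsuff b
      simp only [hrdef] at this
      linarith
    set z : ℕ → ℝ := fun k => if h : k < n then r ⟨k, h⟩ * (d ⟨k, h⟩)⁻¹ else 0 with hzdef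
    have hz : ∀ (k : ℕ) (h : k < n), z k = r ⟨k, h⟩ * (d ⟨k, h⟩)⁻¹ := fun k h => dif_pos h
    have hrz : ∀ y : Fin n, r y = d y * z y.1 := by
      intro y
      rw [hz y.1 y.isLt]
      have he : (⟨y.1, y.isLt⟩ : Fin n) = y := rfl
      rw [he]
      field_simp [hdne y]
    have heq : ∀ y : Fin n, r y
        = (if 0 < y.1 then z (y.1 - 1) else 0) + (if y.1 + 1 < n then z (y.1 + 1) else 0) := by
      intro y
      have h1 := hG1 a y
      have h2 := hG1' a y
      rw [mul_L_apply] at h1 h2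
      have h3 : r y
          = ((if h : 0 < y.1 then
                𝔾 a ⟨y.1 - 1, Nat.lt_of_le_of_lt (Nat.sub_le _ _) y.isLt⟩
                  * (d ⟨y.1 - 1, Nat.lt_of_le_of_lt (Nat.sub_le _ _) y.isLt⟩)⁻¹ else 0)
            + (if h : y.1 + 1 < n then 𝔾 a ⟨y.1 + 1, h⟩ * (d ⟨y.1 + 1, h⟩)⁻¹ else 0))
          - ((if h : 0 < y.1 then
                G' a ⟨y.1 - 1, Nat.lt_of_le_of_lt (Nat.sub_le _ _) y.isLt⟩
                  * (d ⟨y.1 - 1, Nat.lt_of_le_of_lt (Nat.sub_le _ _) y.isLt⟩)⁻¹ else 0)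
            + (if h : y.1 + 1 < n then G' a ⟨y.1 + 1, h⟩ * (d ⟨y.1 + 1, h⟩)⁻¹ else 0)) := by
        simp only [hrdef]
        linarith
      rw [h3]
      by_cases hA : 0 < y.1 <;> by_cases hB : y.1 + 1 < n
      · rw [dif_pos hA, dif_pos hA, dif_pos hB, dif_pos hB, if_pos hA, if_pos hB,
          hz (y.1 - 1) (Nat.lt_of_le_of_lt (Nat.sub_le _ _) y.isLt), hz (y.1 + 1) hB]
        simp only [hrdef]
        ring
      · rw [dif_pos hA, dif_pos hA, dif_neg hB, dif_neg hB, if_pos hA, if_neg hB,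
          hz (y.1 - 1) (Nat.lt_of_le_of_lt (Nat.sub_le _ _) y.isLt)]
        simp only [hrdef]
        ring
      · rw [dif_neg hA, dif_neg hA, dif_pos hB, dif_pos hB, if_neg hA, if_pos hB,
          hz (y.1 + 1) hB]
        simp only [hrdef]
        ring
      · rw [dif_neg hA, dif_neg hA, dif_neg hB, dif_neg hB, if_neg hA, if_neg hB]
        ring
    have hstep : ∀ k : ℕ, k + 1 < n → z k = z 0 ∧ z (k + 1) = z 0 := by
      intro k
      induction k with
      | zero =>
        intro h1
        refine ⟨rfl, ?_⟩
        have h0n : 0 < n := by omega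
        have hy := heq ⟨0, h0n⟩
        have hr0 := hrz ⟨0, h0n⟩
        rw [hd ⟨0, h0n⟩] at hr0
        rw [if_pos (Or.inl rfl)] at hr0
        rw [if_neg (lt_irrefl 0), if_pos (show 0 + 1 < n by omega)] at hy
        rw [show ((⟨0, h0n⟩ : Fin n) : ℕ) = 0 from rfl] at hr0
        linarith [hy, hr0]
      | succ k ih =>
        intro h1
        obtain ⟨hk, hk1⟩ := ih (by omega)
        refine ⟨hk1, ?_⟩
        have hyn : k + 1 < n := by omega
        have hy := heq ⟨k + 1, hyn⟩
        have hr0 := hrz ⟨k + 1, hyn⟩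
        rw [hd ⟨k + 1, hyn⟩] at hr0
        have hcond : ¬(((⟨k + 1, hyn⟩ : Fin n) : ℕ) = 0 ∨ ((⟨k + 1, hyn⟩ : Fin n) : ℕ) = n - 1) := by
          rw [show ((⟨k + 1, hyn⟩ : Fin n) : ℕ) = k + 1 from rfl]
          omega
        rw [if_neg hcond] at hr0
        rw [if_pos (show 0 < ((⟨k + 1, hyn⟩ : Fin n) : ℕ) by exact Nat.succ_pos k),
          if_pos (show ((⟨k + 1, hyn⟩ : Fin n) : ℕ) + 1 < n by omega)] at hy
        rw [show ((⟨k + 1, hyn⟩ : Fin n) : ℕ) - 1 = k from rfl] at hy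
        rw [show ((⟨k + 1, hyn⟩ : Fin n) : ℕ) = k + 1 from rfl] at hy hr0
        rw [hk] at hy
        rw [hk1] at hr0
        linarith [hy, hr0]
    have hzconst : ∀ k : ℕ, k < n → z k = z 0 := by
      intro k hk
      cases k with
      | zero => rfl
      | succ j => exact (hstep j (by omega)).2
    have hrsum : ∑ y : Fin n, r y = 0 := by
      simp only [hrdef]
      rw [Finset.sum_sub_distrib, hG2 a, hG2' a]
      ring
    have hsum2 : ∑ y : Fin n, r y = z 0 * (2 * (n:ℝ) - 2) := by
      have hrw : ∀ y : Fin n, r y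
          = (fun k : ℕ => (if k = 0 ∨ k = n - 1 then (1:ℝ) else 2)) y.1 * z 0 := by
        intro y
        rw [hrz y, hzconst y.1 y.isLt, hd y]
      rw [Finset.sum_congr rfl (fun y _ => hrw y), ← Finset.sum_mul,
        Fin.sum_univ_eq_sum_range (fun k : ℕ => (if k = 0 ∨ k = n - 1 then (1:ℝ) else 2)) n,
        sum_w n hn]
      ring
    have hz0 : z 0 = 0 := by
      rw [hrsum] at hsum2
      have h2n : (2 * (n:ℝ) - 2) ≠ 0 := by
        have : (2:ℝ) ≤ (n:ℝ) := by exact_mod_cast hn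
        intro h; nlinarith
      rcases mul_eq_zero.mp hsum2.symm with h | h
      · exact h
      · exact absurd h h2n
    intro b
    rw [hrz b, hzconst b.1 b.isLt, hz0]
    ring
  intro u v
  rw [main u v, hG'app]
  by_cases h : (u : ℕ) ≤ (v : ℕ)
  · rw [if_pos h, pathF_le n h]
    unfold pathK
    norm_num
  · rw [if_neg h, pathF_ge n (show (v:ℕ) ≤ (u:ℕ) by omega)]
    unfold pathK
    norm_num
end

section
/- Let n ≥ 2 and let P_n be the path graph with vertices 1,…,n, and let 𝔾 be its Green's function. Then 𝔾(1,j) − 𝔾(n,j) = (n−1)/2 if j = 1; 𝔾(1,j) − 𝔾(n,j) = n + 1 − 2j if 2 ≤ j ≤ n−1; and 𝔾(1,j) − 𝔾(n,j) = −(n−1)/2 if j = n. -/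
lemma adj_sum (n : ℕ) (v : Fin n → ℝ) (y : Fin n) :
    ∑ i, v i * (SimpleGraph.pathGraph n).adjMatrix ℝ i y
      = (if h : 1 ≤ (y : ℕ) then v ⟨(y : ℕ) - 1, by omega⟩ else 0)
      + (if h : (y : ℕ) + 1 < n then v ⟨(y : ℕ) + 1, h⟩ else 0) := by
  have hsplit : ∀ i : Fin n, v i * (SimpleGraph.pathGraph n).adjMatrix ℝ i y
      = (if (i : ℕ) + 1 = (y : ℕ) then v i else 0)
        + (if (y : ℕ) + 1 = (i : ℕ) then v i else 0) := by
    intro i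
    rw [SimpleGraph.adjMatrix_apply]
    simp only [SimpleGraph.pathGraph_adj]
    by_cases h1 : (i : ℕ) + 1 = (y : ℕ) <;> by_cases h2 : (y : ℕ) + 1 = (i : ℕ) <;>
      simp [h1, h2] <;> omega
  rw [Finset.sum_congr rfl fun i _ => hsplit i, Finset.sum_add_distrib]
  congr 1
  · by_cases hy : 1 ≤ (y : ℕ)
    · rw [dif_pos hy]
      have : ∀ i : Fin n, ((i : ℕ) + 1 = (y : ℕ)) ↔ i = ⟨(y : ℕ) - 1, by omega⟩ := by
        intro i; rw [Fin.ext_iff]; simp; omega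
      simp_rw [this]
      simp
    · rw [dif_neg hy]
      refine Finset.sum_eq_zero fun i _ => ?_
      rw [if_neg (by omega)]
  · by_cases hy : (y : ℕ) + 1 < n
    · rw [dif_pos hy]
      have : ∀ i : Fin n, ((y : ℕ) + 1 = (i : ℕ)) ↔ i = ⟨(y : ℕ) + 1, hy⟩ := by
        intro i; rw [Fin.ext_iff]; simp; omega
      simp_rw [this]
      simp
    · rw [dif_neg hy]
      refine Finset.sum_eq_zero fun i _ => ?_
      rw [if_neg (by omega)]

set_option maxHeartbeats 2000000 in
/-- For `n ≥ 2` and the Green's function `𝔾` of the path `P_n` (vertices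
`1,…,n`, here `0`-indexed as `Fin n`):
`𝔾(1,j) − 𝔾(n,j)` equals `(n−1)/2` for `j = 1`, `n+1−2j` for `2 ≤ j ≤ n−1`, and `−(n−1)/2`
for `j = n`. -/
theorem green_function_path_endpoint_difference
    (n : ℕ) (hn : 2 ≤ n)
    (d : Fin n → ℝ) (hd : ∀ i, d i = if (i : ℕ) = 0 ∨ (i : ℕ) = n - 1 then 1 else 2)
    (𝔾 : Matrix (Fin n) (Fin n) ℝ)
    (hG1 : ∀ x y : Fin n,
      (𝔾 * (1 - (Matrix.diagonal fun i => (d i)⁻¹) * (SimpleGraph.pathGraph n).adjMatrix ℝ)) x y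
        = (if x = y then (1 : ℝ) else 0) - d y / (2 * ((n : ℝ) - 1)))
    (hG2 : ∀ x : Fin n, ∑ y, 𝔾 x y = 0) :
    ∀ j : Fin n,
      𝔾 (⟨0, by omega⟩ : Fin n) j - 𝔾 (⟨n - 1, by omega⟩ : Fin n) j =
        if (j : ℕ) = 0 then ((n : ℝ) - 1) / 2
        else if (j : ℕ) = n - 1 then -(((n : ℝ) - 1) / 2)
        else (n : ℝ) - 1 - 2 * (j : ℝ) := by
  have hd_ne : ∀ i, d i ≠ 0 := by
    intro i; rw [hd i]; split <;> norm_num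
  have hdk : ∀ (k : ℕ) (hk : k < n),
      d ⟨k, hk⟩ = if k = 0 ∨ k = n - 1 then 1 else 2 := fun k hk => hd ⟨k, hk⟩
  set z : Fin n := ⟨0, by omega⟩ with hz
  set e : Fin n := ⟨n - 1, by omega⟩ with he
  -- the candidate solution
  obtain ⟨p, hp⟩ : ∃ p : ℕ → ℝ, p = fun k : ℕ => ((n : ℝ) - 1 - 2 * (k : ℝ)) / 2 := ⟨_, rfl⟩
  obtain ⟨g, hgdef⟩ : ∃ g : Fin n → ℝ, g = fun i => d i * p (i : ℕ) := ⟨_, rfl⟩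
  obtain ⟨f, hfdef⟩ : ∃ f : Fin n → ℝ, f = fun i => 𝔾 z i - 𝔾 e i := ⟨_, rfl⟩
  -- the defining equation for f
  have hmul : ∀ (x y : Fin n),
      (𝔾 * (1 - (Matrix.diagonal fun i => (d i)⁻¹) * (SimpleGraph.pathGraph n).adjMatrix ℝ)) x y
        = 𝔾 x y - ∑ i, (𝔾 x i * (d i)⁻¹) * (SimpleGraph.pathGraph n).adjMatrix ℝ i y := by
    intro x y
    rw [Matrix.mul_sub, Matrix.mul_one, Matrix.sub_apply, ← Matrix.mul_assoc,
      Matrix.mul_apply]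
    congr 1
    refine Finset.sum_congr rfl fun i _ => ?_
    rw [Matrix.mul_diagonal]
  have hfeq : ∀ y : Fin n,
      f y - ∑ i, (f i * (d i)⁻¹) * (SimpleGraph.pathGraph n).adjMatrix ℝ i y
        = (if z = y then (1 : ℝ) else 0) - (if e = y then (1 : ℝ) else 0) := by
    intro y
    have h1 := hG1 z y
    have h2 := hG1 e y
    rw [hmul] at h1 h2
    have key : f y - ∑ i, (f i * (d i)⁻¹) * (SimpleGraph.pathGraph n).adjMatrix ℝ i y
        = (𝔾 z y - ∑ i, (𝔾 z i * (d i)⁻¹) * (SimpleGraph.pathGraph n).adjMatrix ℝ i y)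
          - (𝔾 e y - ∑ i, (𝔾 e i * (d i)⁻¹) * (SimpleGraph.pathGraph n).adjMatrix ℝ i y) := by
      simp only [hfdef]
      have hsp : ∀ i : Fin n,
          ((𝔾 z i - 𝔾 e i) * (d i)⁻¹) * (SimpleGraph.pathGraph n).adjMatrix ℝ i y
            = (𝔾 z i * (d i)⁻¹) * (SimpleGraph.pathGraph n).adjMatrix ℝ i y
              - (𝔾 e i * (d i)⁻¹) * (SimpleGraph.pathGraph n).adjMatrix ℝ i y :=
        fun i => by ring
      rw [Finset.sum_congr rfl fun i _ => hsp i, Finset.sum_sub_distrib]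
      ring
    rw [key, h1, h2]
    ring
  -- g satisfies the same equation
  have hgd : ∀ i : Fin n, g i * (d i)⁻¹ = p (i : ℕ) := by
    intro i
    simp only [hgdef]
    rw [mul_comm (d i) (p (i : ℕ)), mul_assoc, mul_inv_cancel₀ (hd_ne i), mul_one]
  have hgeq : ∀ y : Fin n,
      g y - ∑ i, (g i * (d i)⁻¹) * (SimpleGraph.pathGraph n).adjMatrix ℝ i y
        = (if z = y then (1 : ℝ) else 0) - (if e = y then (1 : ℝ) else 0) := by
    intro y
    rw [adj_sum n (fun i => g i * (d i)⁻¹) y]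
    simp only [hgd]
    rcases Nat.lt_or_ge 0 (y : ℕ) with hy0 | hy0
    · rcases Nat.lt_or_ge ((y : ℕ) + 1) n with hy1 | hy1
      · -- interior
        have hyz : z ≠ y := by simp [hz, Fin.ext_iff]; omega
        have hye : e ≠ y := by simp [he, Fin.ext_iff]; omega
        rw [if_neg hyz, if_neg hye, dif_pos (by omega : 1 ≤ (y : ℕ)), dif_pos hy1]
        simp only [hgdef]
        rw [hd y, if_neg (by omega)]
        have h1 : (((y : ℕ) - 1 : ℕ) : ℝ) = ((y : ℕ) : ℝ) - 1 := by
          have : 1 ≤ (y : ℕ) := by omega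
          push_cast [Nat.cast_sub this]
          ring
        simp only [hp, h1]
        push_cast
        ring
      · -- y = n - 1, i.e. y = e
        have hye : e = y := by simp [he, Fin.ext_iff]; omega
        have hyz : z ≠ y := by simp [hz, Fin.ext_iff]; omega
        rw [if_neg hyz, if_pos hye, dif_pos (by omega : 1 ≤ (y : ℕ)), dif_neg (by omega)]
        simp only [hgdef]
        rw [hd y, if_pos (by omega)]
        have h1 : (((y : ℕ) - 1 : ℕ) : ℝ) = ((y : ℕ) : ℝ) - 1 := by
          have : 1 ≤ (y : ℕ) := by omega
          push_cast [Nat.cast_sub this]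
          ring
        simp only [hp, h1]
        ring
    · -- y = 0 = z
      have hyz : z = y := by simp [hz, Fin.ext_iff]; omega
      have hye : e ≠ y := by simp [he, Fin.ext_iff]; omega
      rw [if_pos hyz, if_neg hye, dif_neg (by omega), dif_pos (by omega : (y : ℕ) + 1 < n)]
      simp only [hgdef]
      rw [hd y, if_pos (by omega)]
      have hy0' : (y : ℕ) = 0 := by omega
      simp only [hp, hy0']
      push_cast
      ring
  -- h := f - g is "harmonic"; deduce it vanishes
  obtain ⟨w, hw⟩ : ∃ w : Fin n → ℝ, w = fun i => (f i - g i) * (d i)⁻¹ := ⟨_, rfl⟩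
  have hwd : ∀ i : Fin n, f i - g i = w i * d i := by
    intro i
    simp only [hw]
    rw [mul_assoc, inv_mul_cancel₀ (hd_ne i), mul_one]
  have hheq : ∀ y : Fin n, w y * d y
      = (if h : 1 ≤ (y : ℕ) then w ⟨(y : ℕ) - 1, by omega⟩ else 0)
        + (if h : (y : ℕ) + 1 < n then w ⟨(y : ℕ) + 1, h⟩ else 0) := by
    intro y
    have h1 := hfeq y
    have h2 := hgeq y
    have h3 : (f y - g y) - ∑ i, ((f i - g i) * (d i)⁻¹) * (SimpleGraph.pathGraph n).adjMatrix ℝ i y = 0 := by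
      have hsp : ∀ i : Fin n, ((f i - g i) * (d i)⁻¹) * (SimpleGraph.pathGraph n).adjMatrix ℝ i y
          = (f i * (d i)⁻¹) * (SimpleGraph.pathGraph n).adjMatrix ℝ i y
            - (g i * (d i)⁻¹) * (SimpleGraph.pathGraph n).adjMatrix ℝ i y :=
        fun i => by ring
      rw [Finset.sum_congr rfl fun i _ => hsp i, Finset.sum_sub_distrib]
      rw [show (f y - g y)
          - (∑ i, (f i * (d i)⁻¹) * (SimpleGraph.pathGraph n).adjMatrix ℝ i y
            - ∑ i, (g i * (d i)⁻¹) * (SimpleGraph.pathGraph n).adjMatrix ℝ i y)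
        = (f y - ∑ i, (f i * (d i)⁻¹) * (SimpleGraph.pathGraph n).adjMatrix ℝ i y)
          - (g y - ∑ i, (g i * (d i)⁻¹) * (SimpleGraph.pathGraph n).adjMatrix ℝ i y) from by ring]
      rw [h1, h2]
      ring
    rw [adj_sum n (fun i => (f i - g i) * (d i)⁻¹) y] at h3
    have hwi : ∀ i : Fin n, (f i - g i) * (d i)⁻¹ = w i := fun i => by rw [hw]
    simp only [hwi] at h3
    rw [← hwd y]
    linarith [h3]
  -- pass to a ℕ-indexed function to avoid Fin proof juggling
  obtain ⟨W, hW⟩ : ∃ W : ℕ → ℝ, W = fun k => if hk : k < n then w ⟨k, hk⟩ else 0 := ⟨_, rfl⟩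
  have hWw : ∀ (k : ℕ) (hk : k < n), W k = w ⟨k, hk⟩ := by
    intro k hk
    rw [hW]
    exact dif_pos hk
  have hstepW : ∀ (k : ℕ), k < n →
      W k * (if k = 0 ∨ k = n - 1 then 1 else 2)
        = (if 1 ≤ k then W (k - 1) else 0) + (if k + 1 < n then W (k + 1) else 0) := by
    intro k hk
    have h := hheq ⟨k, hk⟩
    rw [hdk k hk] at h
    by_cases h1 : 1 ≤ k
    · by_cases h2 : k + 1 < n
      · rw [dif_pos h1, dif_pos h2] at h
        rw [if_pos h1, if_pos h2, hWw k hk, hWw (k - 1) (by omega), hWw (k + 1) h2]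
        exact h
      · rw [dif_pos h1, dif_neg h2] at h
        rw [if_pos h1, if_neg h2, hWw k hk, hWw (k - 1) (by omega)]
        exact h
    · by_cases h2 : k + 1 < n
      · rw [dif_neg h1, dif_pos h2] at h
        rw [if_neg h1, if_pos h2, hWw k hk, hWw (k + 1) h2]
        exact h
      · rw [dif_neg h1, dif_neg h2] at h
        rw [if_neg h1, if_neg h2, hWw k hk]
        exact h
  have hWconst : ∀ k : ℕ, k < n → W k = W 0 := by
    intro k
    induction k using Nat.strong_induction_on with
    | _ k ih =>
      intro hk
      match k, hk with
      | 0, hk => rfl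
      | 1, hk =>
        have h0 := hstepW 0 (by omega)
        rw [if_pos (Or.inl rfl), if_neg (by omega), if_pos (by omega : 0 + 1 < n)] at h0
        rw [show (0 : ℕ) + 1 = 1 from rfl] at h0
        linarith
      | (m + 2), hk =>
        have h1 := hstepW (m + 1) (by omega)
        rw [if_neg (by omega), if_pos (by omega : 1 ≤ m + 1),
          if_pos (by omega : (m + 1) + 1 < n)] at h1
        rw [show m + 1 - 1 = m from rfl, show (m + 1) + 1 = m + 2 from rfl] at h1
        rw [ih m (by omega) (by omega), ih (m + 1) (by omega) (by omega)] at h1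
        linarith
  have hwW : ∀ i : Fin n, w i = W 0 := by
    intro i
    have h1 : W (i : ℕ) = w i := hWw (i : ℕ) i.isLt
    rw [← h1, hWconst (i : ℕ) i.isLt]
  -- sum of d
  have hsum_d : ∑ i, d i = 2 * (n : ℝ) - 2 := by
    have hrw : ∀ i : Fin n, d i
        = 2 - (if i = z then (1 : ℝ) else 0) - (if i = e then (1 : ℝ) else 0) := by
      intro i
      rw [hd i]
      by_cases h0 : (i : ℕ) = 0
      · rw [if_pos (Or.inl h0), if_pos (by simp [hz, Fin.ext_iff, h0]),
          if_neg (by simp [he, Fin.ext_iff]; omega)]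
        norm_num
      · by_cases h1 : (i : ℕ) = n - 1
        · rw [if_pos (Or.inr h1), if_neg (by simp [hz, Fin.ext_iff]; omega),
            if_pos (by simp [he, Fin.ext_iff, h1])]
          norm_num
        · rw [if_neg (by tauto), if_neg (by simp [hz, Fin.ext_iff]; omega),
            if_neg (by simp [he, Fin.ext_iff]; omega)]
          norm_num
    rw [Finset.sum_congr rfl fun i _ => hrw i]
    rw [Finset.sum_sub_distrib, Finset.sum_sub_distrib]
    rw [Finset.sum_ite_eq' Finset.univ z fun _ => (1 : ℝ),
      Finset.sum_ite_eq' Finset.univ e fun _ => (1 : ℝ)]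
    simp [Finset.card_univ, mul_comm]
    ring
  -- sum of f is 0
  have hsum_f : ∑ i, f i = 0 := by
    simp only [hfdef]
    rw [Finset.sum_sub_distrib, hG2 z, hG2 e]
    ring
  -- Gauss sum
  have hgauss : (∑ i : Fin n, (((i : ℕ) : ℝ))) * 2 = (n : ℝ) * ((n : ℝ) - 1) := by
    rw [Fin.sum_univ_eq_sum_range (fun k => ((k : ℕ) : ℝ)) n]
    have h1 : (∑ i ∈ Finset.range n, (i : ℝ)) = ((∑ i ∈ Finset.range n, i : ℕ) : ℝ) := by
      push_cast
      rfl
    rw [h1]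
    have h2 := Finset.sum_range_id_mul_two n
    have h3 : ((∑ i ∈ Finset.range n, i : ℕ) : ℝ) * 2 = ((n * (n - 1) : ℕ) : ℝ) := by
      exact_mod_cast congrArg (Nat.cast : ℕ → ℝ) h2
    rw [h3]
    push_cast [Nat.cast_sub (by omega : 1 ≤ n)]
    ring
  -- sum of g is 0
  have hsum_g : ∑ i, g i = 0 := by
    have hrw : ∀ i : Fin n, g i = ((n : ℝ) - 1 - 2 * ((i : ℕ) : ℝ))
        - (if i = z then p 0 else 0) - (if i = e then p (n - 1) else 0) := by
      intro i
      simp only [hgdef]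
      rw [hd i]
      by_cases h0 : (i : ℕ) = 0
      · rw [if_pos (Or.inl h0), if_pos (by simp [hz, Fin.ext_iff, h0]),
          if_neg (by simp [he, Fin.ext_iff]; omega)]
        simp only [hp, h0]
        push_cast
        ring
      · by_cases h1 : (i : ℕ) = n - 1
        · rw [if_pos (Or.inr h1), if_neg (by simp [hz, Fin.ext_iff]; omega),
            if_pos (by simp [he, Fin.ext_iff, h1])]
          simp only [hp, h1]
          ring
        · rw [if_neg (by tauto), if_neg (by simp [hz, Fin.ext_iff]; omega),
            if_neg (by simp [he, Fin.ext_iff]; omega)]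
          simp only [hp]
          ring
    rw [Finset.sum_congr rfl fun i _ => hrw i]
    rw [Finset.sum_sub_distrib, Finset.sum_sub_distrib]
    rw [Finset.sum_ite_eq' Finset.univ z fun _ => p 0,
      Finset.sum_ite_eq' Finset.univ e fun _ => p (n - 1)]
    simp only [Finset.mem_univ, if_pos]
    have hpsum : p 0 + p (n - 1) = 0 := by
      simp only [hp]
      have h4 : ((n - 1 : ℕ) : ℝ) = (n : ℝ) - 1 := by
        push_cast [Nat.cast_sub (by omega : 1 ≤ n)]
        ring
      rw [h4]
      push_cast
      ring
    have hsum1 : ∑ i : Fin n, ((n : ℝ) - 1 - 2 * ((i : ℕ) : ℝ)) = 0 := by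
      rw [Finset.sum_sub_distrib, Finset.sum_const, ← Finset.mul_sum]
      simp only [Finset.card_univ, Fintype.card_fin, nsmul_eq_mul]
      linarith [hgauss]
    rw [hsum1]
    linarith [hpsum]
  -- conclude W 0 = 0
  have hW0 : W 0 = 0 := by
    have h1 : ∑ i, (f i - g i) = 0 := by
      rw [Finset.sum_sub_distrib, hsum_f, hsum_g]
      ring
    have h2 : ∑ i, (f i - g i) = W 0 * (2 * (n : ℝ) - 2) := by
      have hterm : ∀ i : Fin n, f i - g i = W 0 * d i := by
        intro i
        rw [hwd i, hwW i]
      rw [Finset.sum_congr rfl fun i _ => hterm i, ← Finset.mul_sum, hsum_d]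
    rw [h1] at h2
    have hne : (2 * (n : ℝ) - 2) ≠ 0 := by
      have h2n : (2 : ℝ) ≤ (n : ℝ) := by exact_mod_cast hn
      nlinarith
    rcases mul_eq_zero.mp h2.symm with h | h
    · exact h
    · exact absurd h hne
  -- f = g
  have hfg : ∀ i : Fin n, f i = g i := by
    intro i
    have h1 := hwd i
    rw [hwW i, hW0] at h1
    linarith
  intro j
  have hstart : 𝔾 (⟨0, by omega⟩ : Fin n) j - 𝔾 (⟨n - 1, by omega⟩ : Fin n) j = f j := by
    rw [hfdef]
  rw [hstart, hfg j]
  simp only [hgdef]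
  rw [hd j]
  by_cases h0 : (j : ℕ) = 0
  · rw [if_pos (Or.inl h0), if_pos h0]
    simp only [hp, h0]
    push_cast
    ring
  · by_cases h1 : (j : ℕ) = n - 1
    · rw [if_pos (Or.inr h1), if_neg h0, if_pos h1]
      simp only [hp, h1]
      have h4 : ((n - 1 : ℕ) : ℝ) = (n : ℝ) - 1 := by
        push_cast [Nat.cast_sub (by omega : 1 ≤ n)]
        ring
      rw [h4]
      ring
    · rw [if_neg (by tauto), if_neg h0, if_neg h1]
      simp only [hp]
      ring
end

section
/- Let n = 2k be even with k ≥ 2, and let C_n be the cycle graph on vertices 1,…,n. Then the Green's function 𝔾 of C_n is given by 𝔾(x,y) = (1/(2k))(k − |x−y|_c)² − k/6 − 1/(12k) for all vertices x, y, where |x−y|_c denotes the graph distance between x and y in C_n. -/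
/-!
Fix a row `x` of `𝔾`. The defining identity says that `y ↦ 𝔾 x y` has discrete Laplacian
`δ_x − 1/n` on `C_n`. So does `y ↦ cycleGreen n |x − y|_c`: a quadratic in the distance has
constant second difference, and its kink at `x` produces `δ_x`. The difference of the two is
harmonic on the cycle, so its steps are constant; they sum to zero around the cycle, so the
difference is constant, and it vanishes because both rows sum to zero. The argument works for every
`n ≥ 3`, odd or even.
-/

/-- The graph distance `|x−y|_c = min(|x−y|, n−|x−y|)` between two vertices of the cycle
`C_n`. -/
def cycleDist (n : ℕ) (x y : Fin n) : ℕ :=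
  min ((x : ℤ) - (y : ℤ)).natAbs (n - ((x : ℤ) - (y : ℤ)).natAbs)

open Finset SimpleGraph

namespace Fin

variable {n : ℕ} [NeZero n]

open Fin.NatCast in
theorem apply_eq_apply_zero_of_apply_add_one_eq {α : Type*} {g : Fin n → α}
    (hg : ∀ y, g (y + 1) = g y) (y : Fin n) : g y = g 0 := by
  have h : ∀ m : ℕ, g (m : Fin n) = g 0 := by
    intro m
    induction m with
    | zero => simp
    | succ m ih => rw [Nat.cast_succ, hg, ih]
  simpa using h y

theorem eq_zero_of_sub_eq_sub_of_sum_eq_zero {M : Type*} [AddCommGroup M] [IsAddTorsionFree M]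
    {h : Fin n → M} (hstep : ∀ y, h (y + 1) - h y = h y - h (y - 1))
    (hsum : ∑ y, h y = 0) (y : Fin n) : h y = 0 := by
  have hn : n ≠ 0 := NeZero.ne n
  have hd : ∀ y, h (y + 1) - h y = h (0 + 1) - h 0 :=
    apply_eq_apply_zero_of_apply_add_one_eq fun y => by rw [hstep (y + 1), add_sub_cancel_right]
  have hd0 : h (0 + 1) - h 0 = 0 := by
    have htel : ∑ y, (h (y + 1) - h y) = 0 := by
      rw [sum_sub_distrib, Fintype.sum_equiv (Equiv.addRight 1) (fun y => h (y + 1)) h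
        fun _ => rfl, sub_self]
    rw [sum_congr rfl fun y _ => hd y, sum_const] at htel
    exact (nsmul_eq_zero_iff_right hn).mp htel
  have hconst : ∀ y, h y = h 0 :=
    apply_eq_apply_zero_of_apply_add_one_eq fun y => sub_eq_zero.mp ((hd y).trans hd0)
  rw [sum_congr rfl fun y _ => hconst y, sum_const, nsmul_eq_zero_iff_right hn] at hsum
  rw [hconst y, hsum]

end Fin

theorem cycleDist_eq_or_add_eq (n : ℕ) [NeZero n] (x y : Fin n) :
    cycleDist n x y = (y - x).val ∨ cycleDist n x y + (y - x).val = n := by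
  unfold cycleDist
  rcases le_or_gt x y with hxy | hxy
  · rw [Fin.coe_sub_iff_le.mpr hxy]
    have := Fin.le_iff_val_le_val.mp hxy
    omega
  · rw [Fin.coe_sub_iff_lt.mpr hxy]
    have := Fin.lt_def.mp hxy
    have := x.isLt
    omega

theorem cycleGraph_sum_neighborFinset {M : Type*} [AddCommMonoid M] {n : ℕ} [NeZero n]
    (hn : 3 ≤ n) (f : Fin n → M) (y : Fin n) :
    ∑ u ∈ (cycleGraph n).neighborFinset y, f u = f (y - 1) + f (y + 1) := by
  obtain ⟨m, rfl⟩ : ∃ m, n = m + 3 := ⟨n - 3, by omega⟩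
  rw [cycleGraph_neighborFinset, sum_pair]
  simp only [ne_eq, sub_eq_iff_eq_add, add_assoc y, left_eq_add]
  exact ne_of_beq_false rfl

/-- The constant `n / 12 + 1 / (6 * n)` is the mean of `(n / 2 - t) ^ 2 / n` over `t < n`. -/
noncomputable def cycleGreen (n : ℕ) (s : ℝ) : ℝ :=
  (n / 2 - s) ^ 2 / n - n / 12 - 1 / (6 * n)

section cycleGreen

variable {n : ℕ}

theorem cycleGreen_sub_left (s : ℝ) : cycleGreen n (n - s) = cycleGreen n s := by
  unfold cycleGreen; ring

theorem cycleGreen_sub_one_add_cycleGreen_add_one (hn : n ≠ 0) (s : ℝ) :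
    cycleGreen n (s - 1) + cycleGreen n (s + 1) = 2 * cycleGreen n s + 2 / n := by
  unfold cycleGreen; field_simp; ring

theorem sum_range_cycleGreen (hn : n ≠ 0) : ∑ t ∈ range n, cycleGreen n t = 0 := by
  rw [sum_range_induction (fun t : ℕ => cycleGreen n t) (fun m : ℕ => ((m : ℝ) * (n / 2) ^ 2
      - n / 2 * m * (m - 1) + m * (m - 1) * (2 * m - 1) / 6) / n - m * (n / 12 + 1 / (6 * n)))
      (by simp) n fun m _ => by unfold cycleGreen; push_cast; ring]
  field_simp; ring

variable [NeZero n]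

theorem cycleGreen_val_add_one (t : Fin n) :
    cycleGreen n (t + 1 : Fin n).val = cycleGreen n (t.val + 1) := by
  rcases Nat.lt_or_ge (t.val + 1) n with ht | ht
  · rw [Fin.val_add_one_of_lt' ht]; push_cast; rfl
  · have htn : t.val + 1 = n := by omega
    have : t + 1 = 0 := by
      ext; simp [Fin.val_add, htn]
    rw [this, ← cycleGreen_sub_left, Fin.val_zero, Nat.cast_zero, sub_zero, ← Nat.cast_add_one,
      htn]

theorem cycleGreen_val_sub_one (t : Fin n) :
    cycleGreen n (t - 1 : Fin n).val = cycleGreen n (t.val - 1) - if t = 0 then 2 else 0 := by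
  by_cases ht : t = 0
  · subst ht
    obtain ⟨m, rfl⟩ : ∃ m, n = m + 1 := Nat.exists_eq_succ_of_ne_zero (NeZero.ne n)
    rw [zero_sub, Fin.coe_neg_one, if_pos rfl, ← cycleGreen_sub_left]
    unfold cycleGreen
    simp only [Fin.val_zero, Nat.cast_zero, Nat.cast_add, Nat.cast_one]
    field_simp
    ring
  · rw [Fin.val_sub_one_of_ne_zero ht, if_neg ht, sub_zero,
      Nat.cast_sub (Nat.one_le_iff_ne_zero.mpr (Fin.val_ne_zero_iff.mpr ht)), Nat.cast_one]

theorem cycleGreen_row_laplacian (x y : Fin n) :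
    cycleGreen n (y - x).val - (cycleGreen n (y - 1 - x).val + cycleGreen n (y + 1 - x).val) / 2
      = (if x = y then 1 else 0) - 1 / n := by
  have hsecond := cycleGreen_sub_one_add_cycleGreen_add_one (NeZero.ne n) (y - x).val
  rw [sub_right_comm y 1 x, add_sub_right_comm y 1 x, cycleGreen_val_sub_one,
    cycleGreen_val_add_one]
  simp only [sub_eq_zero, eq_comm (a := y)]
  split_ifs <;> linear_combination (-1 / 2 : ℝ) * hsecond

theorem sum_cycleGreen_val_sub (x : Fin n) : ∑ y, cycleGreen n (y - x).val = 0 := by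
  rw [Fintype.sum_equiv (Equiv.subRight x) (fun y => cycleGreen n (y - x).val)
      (fun t => cycleGreen n t.val) fun _ => rfl,
    Fin.sum_univ_eq_sum_range (fun t => cycleGreen n t), sum_range_cycleGreen (NeZero.ne n)]

theorem cycleGreen_cycleDist (x y : Fin n) :
    cycleGreen n (cycleDist n x y) = cycleGreen n (y - x).val := by
  rcases cycleDist_eq_or_add_eq n x y with h | h
  · rw [h]
  · rw [← cycleGreen_sub_left, eq_sub_of_add_eq (by exact_mod_cast h : (cycleDist n x y : ℝ)
      + (y - x).val = n), sub_sub_cancel]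

end cycleGreen

theorem cycleGraph_green_row_laplacian {n : ℕ} [NeZero n] (hn : 3 ≤ n)
    (𝔾 : Matrix (Fin n) (Fin n) ℝ) (x y : Fin n)
    (hG : (𝔾 * (1 - ((Matrix.diagonal fun _ => (2 : ℝ)⁻¹ : Matrix (Fin n) (Fin n) ℝ))
        * (cycleGraph n).adjMatrix ℝ)) x y
      = (if x = y then (1 : ℝ) else 0) - 2 / (2 * (n : ℝ))) :
    𝔾 x y - (𝔾 x (y - 1) + 𝔾 x (y + 1)) / 2 = (if x = y then 1 else 0) - 1 / n := by
  rw [Matrix.mul_sub, Matrix.mul_one, Matrix.sub_apply, ← Matrix.mul_assoc, mul_adjMatrix_apply,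
    cycleGraph_sum_neighborFinset hn, div_mul_cancel_left₀ two_ne_zero] at hG
  simp only [Matrix.mul_diagonal] at hG
  rw [one_div, ← hG]
  ring

theorem cycleGraph_green_eq_cycleGreen {n : ℕ} [NeZero n] (hn : 3 ≤ n)
    (𝔾 : Matrix (Fin n) (Fin n) ℝ)
    (hG1 : ∀ x y : Fin n,
      (𝔾 * (1 - ((Matrix.diagonal fun _ => (2 : ℝ)⁻¹ : Matrix (Fin n) (Fin n) ℝ))
          * (cycleGraph n).adjMatrix ℝ)) x y
        = (if x = y then (1 : ℝ) else 0) - 2 / (2 * (n : ℝ)))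
    (hG2 : ∀ x : Fin n, ∑ y, 𝔾 x y = 0) (x y : Fin n) :
    𝔾 x y = cycleGreen n (cycleDist n x y) := by
  rw [cycleGreen_cycleDist, ← sub_eq_zero]
  refine Fin.eq_zero_of_sub_eq_sub_of_sum_eq_zero
    (h := fun y => 𝔾 x y - cycleGreen n (y - x).val) (fun z => ?_) ?_ y
  · have hG := cycleGraph_green_row_laplacian hn 𝔾 x z (hG1 x z)
    have hC := cycleGreen_row_laplacian x z
    linarith
  · rw [sum_sub_distrib, hG2, sum_cycleGreen_val_sub, sub_self]

/-- For even `n = 2k` with `k ≥ 2`, the Green's function of the cycle `C_n`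
is `𝔾(x,y) = (1/(2k))(k − |x−y|_c)² − k/6 − 1/(12k)`. -/
theorem green_function_even_cycle
    (k : ℕ) (hk : 2 ≤ k)
    -- the Green's function `𝔾` of `C_{2k}` (all degrees are `2`, `vol(C_{2k}) = 2·(2k)`)
    (𝔾 : Matrix (Fin (2 * k)) (Fin (2 * k)) ℝ)
    (hG1 : ∀ x y : Fin (2 * k),
      (𝔾 * (1 - ((Matrix.diagonal fun _ => (2 : ℝ)⁻¹ : Matrix (Fin (2 * k)) (Fin (2 * k)) ℝ))
          * (SimpleGraph.cycleGraph (2 * k)).adjMatrix ℝ)) x y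
        = (if x = y then (1 : ℝ) else 0) - 2 / (2 * (2 * (k : ℝ))))
    (hG2 : ∀ x : Fin (2 * k), ∑ y, 𝔾 x y = 0) :
    ∀ x y : Fin (2 * k),
      𝔾 x y = (1 / (2 * (k : ℝ))) * ((k : ℝ) - (cycleDist (2 * k) x y : ℝ)) ^ 2
        - (k : ℝ) / 6 - 1 / (12 * (k : ℝ)) := by
  have : NeZero (2 * k) := ⟨by omega⟩
  intro x y
  rw [cycleGraph_green_eq_cycleGreen (by omega) 𝔾 (by push_cast; exact hG1) hG2, cycleGreen]
  push_cast
  field_simp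
  ring
end
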